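/- arXiv:1607.07241 — 10 statements merged into one kernel-verified Lean document; each statement's English description precedes it below -/
import Mathlib

section
/- Let w_1, …, w_n be positive integers, d = lcm(w_1, …, w_n), and g(t) = ∏_{i=1}^n (1 − t^{w_i}) (so deg g = w_1 + ⋯ + w_n). Let h(t) ∈ ℂ[t] and let f : ℕ → ℂ satisfy ∑_{k≥0} f(k) t^k = h(t)/g(t) as formal power series. Set k_0 = max{0, deg h − deg g + 1}. Then there exist polynomials P_0, …, P_{d−1} ∈ ℂ[x] such that f(k) = P_{k mod d}(k) for all k ≥ k_0; moreover, if deg h ≥ deg g, then for any polynomials P_0, …, P_{d−1} ∈ ℂ[x] satisfying f(k) = P_{k mod d}(k) for all k ≥ k_0 one has f(k_0 − 1) ≠ P_{(k_0−1) mod d}(k_0 − 1). In other words, the generalized regularity index of f equals max{0, deg h − deg g + 1}. -/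
/-!
Divide: `h = q g + r` with `deg r < deg g`. Every `w i` divides `d`, so `g L = (1 - t^d)^n` for
some `L`, and `f - q` has generating function `r L / (1 - t^d)^n` with `deg (r L) < n d`.
For `k ≡ j (mod d)` the coefficient of `t^k` in `t^j / (1 - t^d)^n` is the binomial polynomial
`binom((k - j)/d + n - 1, n - 1)` in `k`, which also vanishes at the points `k < j` of the
progression as long as `j < k + n d`. Hence `f - q` is a quasi-polynomial of period `d` on all
of `ℕ`, and `f` is one from `k₀` on since `deg q = deg h - deg g`. Any quasi-polynomial agreeing
with `f` from `k₀` on has the same components (they agree at infinitely many points), so at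
`k₀ - 1` it misses `f` by the leading coefficient of `q`.
-/

open Polynomial

namespace Polynomial

lemma natDegree_one_sub_X_pow {R : Type*} [Ring R] [Nontrivial R] (m : ℕ) :
    (1 - X ^ m : R[X]).natDegree = m := by
  rw [← neg_sub, natDegree_neg, ← C_1, natDegree_X_pow_sub_C]

lemma natDegree_prod_one_sub_X_pow {R ι : Type*} [CommRing R] [IsDomain R] (s : Finset ι)
    {w : ι → ℕ} (hw : ∀ i, 0 < w i) :
    (∏ i ∈ s, (1 - X ^ w i : R[X])).natDegree = ∑ i ∈ s, w i := by
  rw [natDegree_prod _ _ fun i _ => ne_zero_of_natDegree_gt (n := 0)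
    ((natDegree_one_sub_X_pow (R := R) (w i)).symm ▸ hw i)]
  simp only [natDegree_one_sub_X_pow]

lemma prod_one_sub_X_pow_dvd {R ι : Type*} [CommRing R] [Fintype ι] {w : ι → ℕ} {d : ℕ}
    (hw : ∀ i, w i ∣ d) :
    ∏ i, (1 - X ^ w i : R[X]) ∣ (1 - X ^ d) ^ Fintype.card ι := by
  rw [← Finset.card_univ, ← Finset.prod_const]
  refine Finset.prod_dvd_prod_of_dvd _ _ fun i _ => ?_
  obtain ⟨m, rfl⟩ := hw i
  simpa [one_pow, pow_mul] using sub_dvd_pow_sub_pow (1 : R[X]) (X ^ w i) m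

lemma natDegree_div {K : Type*} [Field K] (p : K[X]) {q : K[X]} (hq : q ≠ 0) :
    (p / q).natDegree = p.natDegree - q.natDegree := by
  by_cases hpq : p.degree < q.degree
  · rw [(Polynomial.div_eq_zero_iff hq).2 hpq, natDegree_zero]
    have := natDegree_le_natDegree hpq.le
    omega
  · have hsum := degree_add_div hq (not_lt.1 hpq)
    have hdiv : p / q ≠ 0 := mt (Polynomial.div_eq_zero_iff hq).1 hpq
    have hp : p ≠ 0 := fun h => hpq (by simpa [h, bot_lt_iff_ne_bot] using hq)
    rw [degree_eq_natDegree hq, degree_eq_natDegree hdiv, degree_eq_natDegree hp] at hsum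
    have : q.natDegree + (p / q).natDegree = p.natDegree := by exact_mod_cast hsum
    omega

lemma coeff_div_eq_zero_of_natDegree_lt {K : Type*} [Field K] {p q : K[X]} (hq : q ≠ 0) {k : ℕ}
    (hk : p.natDegree < k + q.natDegree) : (p / q).coeff k = 0 := by
  by_cases hpq : p.degree < q.degree
  · rw [(Polynomial.div_eq_zero_iff hq).2 hpq, coeff_zero]
  · have := natDegree_le_natDegree (not_lt.1 hpq)
    exact coeff_eq_zero_of_natDegree_lt (by rw [natDegree_div _ hq]; omega)

lemma coeff_div_natDegree_sub_ne_zero {K : Type*} [Field K] {p q : K[X]} (hp : p ≠ 0)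
    (hq : q ≠ 0) (hqp : q.natDegree ≤ p.natDegree) :
    (p / q).coeff (p.natDegree - q.natDegree) ≠ 0 := by
  have hdiv : p / q ≠ 0 := by
    rw [Ne, Polynomial.div_eq_zero_iff hq, not_lt, degree_eq_natDegree hq, degree_eq_natDegree hp]
    exact_mod_cast hqp
  rw [← natDegree_div _ hq]
  exact leadingCoeff_ne_zero.mpr hdiv

lemma eq_of_eval_natCast_eq_of_mod_eq {K : Type*} [Field K] [CharZero K] {d r k₀ : ℕ}
    (hd : 0 < d) (hr : r < d) {P Q : K[X]}
    (h : ∀ k, k₀ ≤ k → k % d = r → P.eval (k : K) = Q.eval (k : K)) : P = Q := by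
  refine eq_of_infinite_eval_eq P Q <| Set.infinite_of_injective_forall_mem
    (f := fun m : ℕ => ((r + (k₀ + m) * d : ℕ) : K)) (fun a b hab => ?_) fun m => h _ ?_ ?_
  · have := Nat.eq_of_mul_eq_mul_right hd (Nat.add_left_cancel (Nat.cast_injective hab))
    omega
  · nlinarith
  · rw [Nat.add_mul_mod_self_right, Nat.mod_eq_of_lt hr]

end Polynomial

section

variable (K : Type*) [Field K] [CharZero K]

/-- The binomial polynomial `x ↦ binom((x - j) / d + n, n)`. -/
noncomputable def progressionChoose (d j n : ℕ) : K[X] :=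
  C (n.factorial : K)⁻¹ *
    (descPochhammer K n).comp (C (d : K)⁻¹ * (X - C (j : K)) + C (n : K))

variable {K}

lemma eval_progressionChoose {d j n k N : ℕ} (hd : 0 < d) (h : (k : ℤ) + n * d = j + N * d) :
    (progressionChoose K d j n).eval (k : K) = N.choose n := by
  have hN : (d : K)⁻¹ * (k - j) + n = N := by
    have : (k : K) + n * d = j + N * d := by exact_mod_cast h
    have hd' : (d : K) ≠ 0 := Nat.cast_ne_zero.mpr hd.ne'
    field_simp
    linear_combination this
  simp only [progressionChoose, eval_mul, eval_C, eval_comp, eval_add, eval_sub, eval_X, hN,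
    Nat.cast_choose_eq_descPochhammer_div]
  ring

lemma coeff_X_pow_mul_expand_choose {d n j k : ℕ} (hd : 0 < d) (hjk : j < k + (n + 1) * d) :
    PowerSeries.coeff k (PowerSeries.X ^ j *
      PowerSeries.expand d hd.ne' (PowerSeries.mk fun i => ((n + i).choose n : K))) =
      if j % d = k % d then (progressionChoose K d j n).eval (k : K) else 0 := by
  rw [PowerSeries.coeff_X_pow_mul', PowerSeries.coeff_expand, PowerSeries.coeff_mk]
  by_cases hmod : j % d = k % d
  · obtain ⟨t, ht⟩ : (d : ℤ) ∣ k - j := Nat.modEq_iff_dvd.mp hmod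
    have ht_ge : -(n : ℤ) ≤ t := by nlinarith
    obtain ⟨N, hN⟩ : ∃ N : ℕ, (N : ℤ) = t + n := ⟨(t + n).toNat, by omega⟩
    rw [if_pos hmod, eval_progressionChoose hd (by rw [hN]; linear_combination ht)]
    by_cases hjk' : j ≤ k
    · have hnN : n ≤ N := by nlinarith
      have hkj : k - j = d * (N - n) := by zify [hjk', hnN]; linear_combination ht - d * hN
      rw [if_pos hjk', if_pos ⟨_, hkj⟩, hkj, Nat.mul_div_cancel_left _ hd,
        Nat.add_sub_cancel' hnN]
    · rw [if_neg hjk', Nat.choose_eq_zero_of_lt (by nlinarith), Nat.cast_zero]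
  · rw [if_neg hmod]
    split_ifs with hjk' hdvd
    · exact absurd ((Nat.modEq_iff_dvd' hjk').mpr hdvd) hmod
    all_goals rfl

theorem exists_eval_eq_of_mk_mul_one_sub_X_pow_pow {d n : ℕ} (hd : 0 < d) {f : ℕ → K}
    {p : K[X]}
    (hf : PowerSeries.mk f * (1 - PowerSeries.X ^ d) ^ (n + 1) = (p : PowerSeries K)) :
    ∃ P : ℕ → K[X], ∀ k, p.degree < ↑(k + (n + 1) * d) →
      f k = (P (k % d)).eval (k : K) := by
  set S := PowerSeries.expand d hd.ne' (PowerSeries.mk fun i => ((n + i).choose n : K))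
  have hS : (1 - PowerSeries.X ^ d) ^ (n + 1) * S = 1 := by
    simpa [S, mul_comm] using congrArg (PowerSeries.expand d hd.ne')
      (PowerSeries.mk_add_choose_mul_one_sub_pow_eq_one K n)
  have hfS : PowerSeries.mk f = p * S := by rw [← hf, mul_assoc, hS, mul_one]
  refine ⟨fun r => ∑ j ∈ p.support,
    if j % d = r then C (p.coeff j) * progressionChoose K d j n else 0, fun k hk => ?_⟩
  rw [← PowerSeries.coeff_mk k f, hfS]
  conv_lhs => rw [p.as_sum_support_C_mul_X_pow]
  simp only [eval_finsetSum, apply_ite (eval (k : K)), eval_mul, eval_C, eval_zero]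
  rw [← coeToPowerSeries.ringHom_apply, map_sum, Finset.sum_mul, map_sum]
  refine Finset.sum_congr rfl fun j hj => ?_
  have hjk : j < k + (n + 1) * d := by
    exact_mod_cast (le_degree_of_ne_zero (mem_support_iff.mp hj)).trans_lt hk
  rw [coeToPowerSeries.ringHom_apply, coe_mul, coe_C, coe_pow, coe_X, mul_assoc,
    PowerSeries.coeff_C_mul, coeff_X_pow_mul_expand_choose hd hjk, mul_ite, mul_zero]

theorem exists_eq_coeff_div_add_eval {d n : ℕ} (hd : 0 < d) {g h : K[X]}
    (hg : g ∣ (1 - X ^ d) ^ (n + 1)) {f : ℕ → K}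
    (hfg : PowerSeries.mk f * (g : PowerSeries K) = h) :
    ∃ P : ℕ → K[X], ∀ k, f k = (h / g).coeff k + (P (k % d)).eval (k : K) := by
  obtain ⟨L, hL⟩ := hg
  have hpow0 : (1 - X ^ d : K[X]) ^ (n + 1) ≠ 0 :=
    pow_ne_zero _ <| ne_zero_of_natDegree_gt (n := 0) <|
      (natDegree_one_sub_X_pow (R := K) d).symm ▸ hd
  have hg0 : g ≠ 0 := left_ne_zero_of_mul (hL ▸ hpow0)
  have hL0 : L ≠ 0 := right_ne_zero_of_mul (hL ▸ hpow0)
  have hmk : PowerSeries.mk (fun k => f k - (h / g).coeff k) *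
      (1 - PowerSeries.X ^ d) ^ (n + 1) = ((h % g * L : K[X]) : PowerSeries K) := by
    have hXd : (1 - PowerSeries.X ^ d : PowerSeries K) ^ (n + 1) = (g : PowerSeries K) * L := by
      rw [← coe_mul, ← hL]
      push_cast
      rfl
    have hsub : PowerSeries.mk (fun k => f k - (h / g).coeff k) =
        PowerSeries.mk f - ((h / g : K[X]) : PowerSeries K) := by
      ext k
      simp
    rw [hsub, hXd, EuclideanDomain.mod_eq_sub_mul_div, coe_mul, coe_sub, ← hfg]
    push_cast
    ring
  have hdeg : (h % g * L).degree < ↑((n + 1) * d) :=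
    calc (h % g * L).degree = (h % g).degree + L.degree := degree_mul
      _ < g.degree + L.degree :=
          WithBot.add_lt_add_right (degree_ne_bot.mpr hL0) (degree_mod_lt h hg0)
      _ = ↑((n + 1) * d) := by
          rw [← degree_mul, ← hL, degree_eq_natDegree hpow0, natDegree_pow,
            natDegree_one_sub_X_pow]
  obtain ⟨P, hP⟩ := exists_eval_eq_of_mk_mul_one_sub_X_pow_pow hd hmk
  refine ⟨P, fun k => ?_⟩
  rw [← hP k (hdeg.trans_le (by exact_mod_cast Nat.le_add_left _ _))]
  ring

end

/-- Let `w_1, …, w_n` be positive integer weights, `d = lcm(w_i)`,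
`g(t) = ∏ (1 - t^{w_i})` (of degree `∑ w_i`), `h ∈ ℂ[t]`, and `f : ℕ → ℂ` with
`∑ f(k) t^k = h(t)/g(t)`.  With `k₀ = max {0, deg h - deg g + 1}`, there is a
quasi-polynomial `P_0, …, P_{d-1}` with `f(k) = P_{k mod d}(k)` for all `k ≥ k₀`,
and if `deg h ≥ deg g` no such family agrees with `f` at `k₀ - 1`:
the generalized regularity index of `f` is exactly `k₀`. -/
theorem stmt_0 (n : ℕ) (hn : 1 ≤ n) (w : Fin n → ℕ) (hw : ∀ i, 0 < w i)
    (d : ℕ) (hd : d = Finset.lcm Finset.univ w)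
    (h : Polynomial ℂ) (f : ℕ → ℂ)
    (hfg : PowerSeries.mk f * ((∏ i, (1 - Polynomial.X ^ w i : Polynomial ℂ)) : PowerSeries ℂ)
      = (h : PowerSeries ℂ))
    (k₀ : ℕ) (hk₀ : k₀ = ((h.natDegree : ℤ) - (∑ i, w i : ℕ) + 1).toNat) :
    (∃ P : ℕ → Polynomial ℂ, ∀ k, k₀ ≤ k → f k = (P (k % d)).eval (k : ℂ)) ∧
    ((∑ i, w i : ℕ) ≤ h.natDegree →
      ∀ P : ℕ → Polynomial ℂ, (∀ k, k₀ ≤ k → f k = (P (k % d)).eval (k : ℂ)) →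
        f (k₀ - 1) ≠ (P ((k₀ - 1) % d)).eval ((k₀ - 1 : ℕ) : ℂ)) := by
  have hd0 : 0 < d := hd ▸ Nat.pos_of_ne_zero fun h0 => by
    obtain ⟨i, -, hi⟩ := Finset.lcm_eq_zero_iff.mp h0
    exact (hw i).ne' hi
  have hw_pos : 0 < ∑ i, w i :=
    Finset.sum_pos (fun i _ => hw i) ⟨⟨0, hn⟩, Finset.mem_univ _⟩
  set g : ℂ[X] := ∏ i, (1 - X ^ w i)
  have hg_deg : g.natDegree = ∑ i, w i := natDegree_prod_one_sub_X_pow _ hw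
  have hg0 : g ≠ 0 := ne_zero_of_natDegree_gt (hg_deg ▸ hw_pos)
  obtain ⟨m, rfl⟩ : ∃ m, n = m + 1 := ⟨n - 1, by omega⟩
  have hg_dvd : g ∣ (1 - X ^ d) ^ (m + 1) := by
    have := prod_one_sub_X_pow_dvd (R := ℂ) fun i => hd ▸ Finset.dvd_lcm (Finset.mem_univ i)
    rwa [Fintype.card_fin] at this
  replace hfg : PowerSeries.mk f * (g : PowerSeries ℂ) = h := by
    rw [← hfg, ← coeToPowerSeries.ringHom_apply, map_prod]
    rfl
  obtain ⟨P₁, hP₁⟩ := exists_eq_coeff_div_add_eval hd0 hg_dvd hfg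
  have hq : ∀ k, k₀ ≤ k → (h / g).coeff k = 0 := fun k hk =>
    coeff_div_eq_zero_of_natDegree_lt hg0 (by omega)
  refine ⟨⟨P₁, fun k hk => by rw [hP₁, hq k hk, zero_add]⟩, fun hge P hP => ?_⟩
  have hh0 : h ≠ 0 := by
    rintro rfl
    rw [natDegree_zero] at hge
    omega
  have hPP₁ : P ((k₀ - 1) % d) = P₁ ((k₀ - 1) % d) :=
    eq_of_eval_natCast_eq_of_mod_eq hd0 (Nat.mod_lt _ hd0) fun k hk hkd => by
      rw [← hkd, ← hP k hk, hP₁, hq k hk, zero_add]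
  rw [hP₁, hPP₁, Ne, add_eq_right, show k₀ - 1 = h.natDegree - g.natDegree by omega]
  exact coeff_div_natDegree_sub_ne_zero hh0 hg0 (hg_deg ▸ hge)
end

section
/- Let K be a field, R = K[x_1, …, x_n], fix positive integer weights w_1, …, w_n, and let M ⊆ R be a monomial ideal with weighted Hilbert function H(k) = #{α in the staircase of M : w(α) = k}. Suppose d ≥ 1, k_0 ∈ ℕ and P_0, …, P_{d−1} ∈ ℚ[x] satisfy H(k) = P_{k mod d}(k) for all k ≥ k_0. Then the following are equivalent: (i) no two distinct exponents α ≠ β in the staircase of M satisfy w(α) = w(β) (the order domain condition (C2)); (ii) H(k) ∈ {0, 1} for all 0 ≤ k < k_0, and each P_i is the constant polynomial 0 or the constant polynomial 1. -/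
lemma weight_fiber_finite (n k : ℕ) (w : Fin n → ℕ) (hw : ∀ i, 0 < w i) :
    {α : Fin n →₀ ℕ | ∑ i, α i * w i = k}.Finite := by
  have hsub : {α : Fin n →₀ ℕ | ∑ i, α i * w i = k} ⊆
      (fun α : Fin n →₀ ℕ => (α : Fin n → ℕ)) ⁻¹'
        (Set.univ.pi fun _ : Fin n => Set.Iic k) := by
    intro α hα i _
    have h1 : α i * w i ≤ ∑ j, α j * w j :=
      Finset.single_le_sum (f := fun j => α j * w j) (fun j _ => Nat.zero_le _)
        (Finset.mem_univ i)
    have h2 : α i ≤ α i * w i := Nat.le_mul_of_pos_right _ (hw i)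
    have := h2.trans h1
    simpa [Set.mem_Iic, hα] using this.trans_eq hα
  exact ((Set.Finite.pi fun _ => Set.finite_Iic k).preimage
    (DFunLike.coe_injective.injOn)).subset hsub

lemma poly_zero_or_one (q : Polynomial ℚ) (f : ℕ → ℚ) (hf : Function.Injective f)
    (h : ∀ j, q.eval (f j) = 0 ∨ q.eval (f j) = 1) : q = 0 ∨ q = 1 := by
  by_contra hcon
  push_neg at hcon
  obtain ⟨h0, h1⟩ := hcon
  have hq1 : q - 1 ≠ 0 := sub_ne_zero.mpr h1
  have hfin : ({x | q.IsRoot x} ∪ {x | (q - 1).IsRoot x}).Finite :=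
    (Polynomial.finite_setOf_isRoot h0).union (Polynomial.finite_setOf_isRoot hq1)
  have hsub : Set.range f ⊆ {x | q.IsRoot x} ∪ {x | (q - 1).IsRoot x} := by
    rintro _ ⟨j, rfl⟩
    rcases h j with hj | hj
    · exact Or.inl hj
    · exact Or.inr (by simp [Polynomial.IsRoot, hj])
  exact (Set.infinite_range_of_injective hf) (hfin.subset hsub)

/-- Let `M` be a monomial ideal of `K[x_1,…,x_n]` with weighted Hilbert
function `H`, and suppose `P_0, …, P_{d-1} ∈ ℚ[x]` satisfy `H(k) = P_{k mod d}(k)` for all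
`k ≥ k₀`.  Then the order-domain condition (C2) — no two distinct staircase exponents have
the same weight — holds iff `H(k) ∈ {0,1}` for all `0 ≤ k < k₀` and each `P_i` (`i < d`)
is the constant polynomial `0` or `1`. -/
theorem stmt_2 (n : ℕ) (hn : 1 ≤ n) (w : Fin n → ℕ) (hw : ∀ i, 0 < w i)
    (K : Type*) [Field K]
    (M : Ideal (MvPolynomial (Fin n) K))
    (hM : ∃ S : Set (Fin n →₀ ℕ),
      M = Ideal.span ((fun α => MvPolynomial.monomial α (1 : K)) '' S))
    (H : ℕ → ℕ)
    (hH : ∀ k, H k = Set.ncard {α : Fin n →₀ ℕ |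
      MvPolynomial.monomial α (1 : K) ∉ M ∧ ∑ i, α i * w i = k})
    (d : ℕ) (hd : 1 ≤ d) (k₀ : ℕ) (P : ℕ → Polynomial ℚ)
    (hP : ∀ k, k₀ ≤ k → (H k : ℚ) = (P (k % d)).eval (k : ℚ)) :
    (Set.InjOn (fun α : Fin n →₀ ℕ => ∑ i, α i * w i)
        {α : Fin n →₀ ℕ | MvPolynomial.monomial α (1 : K) ∉ M}) ↔
      ((∀ k, k < k₀ → H k = 0 ∨ H k = 1) ∧
        (∀ i, i < d → P i = 0 ∨ P i = 1)) := by
  constructor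
  · intro hinj
    -- first: H k ≤ 1 for all k
    have hH1 : ∀ k, H k = 0 ∨ H k = 1 := by
      intro k
      have hsub : {α : Fin n →₀ ℕ |
          MvPolynomial.monomial α (1 : K) ∉ M ∧ ∑ i, α i * w i = k}.Subsingleton := by
        intro x hx y hy
        exact hinj hx.1 hy.1 (by simp [hx.2, hy.2])
      have := hH k
      rcases hsub.eq_empty_or_singleton with he | ⟨a, ha⟩
      · left; rw [this, he]; simp
      · right; rw [this, ha]; simp
    refine ⟨fun k _ => hH1 k, fun i hi => ?_⟩
    have hmono : StrictMono (fun j : ℕ => i + d * (k₀ + j)) := by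
      intro a b hab
      have : d * (k₀ + a) < d * (k₀ + b) :=
        Nat.mul_lt_mul_of_pos_left (by omega) hd
      show i + d * (k₀ + a) < i + d * (k₀ + b)
      omega
    have hf : Function.Injective (fun j : ℕ => ((i + d * (k₀ + j) : ℕ) : ℚ)) := by
      intro a b hab
      exact hmono.injective (Nat.cast_injective hab)
    apply poly_zero_or_one (P i) _ hf
    intro j
    set k := i + d * (k₀ + j) with hk
    have hk₀ : k₀ ≤ k := by
      have : k₀ + j ≤ d * (k₀ + j) := Nat.le_mul_of_pos_left _ hd
      omega
    have hmod : k % d = i := by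
      rw [hk, Nat.add_mul_mod_self_left, Nat.mod_eq_of_lt hi]
    have := hP k hk₀
    rw [hmod] at this
    rcases hH1 k with h0 | h1
    · left; rw [← this, h0]; norm_num
    · right; rw [← this, h1]; norm_num
  · rintro ⟨h1, h2⟩ α hα β hβ hab
    by_contra hne
    simp only [Set.mem_setOf_eq] at hα hβ
    have hab' : ∑ i, α i * w i = ∑ i, β i * w i := hab
    have hSfin : {γ : Fin n →₀ ℕ |
        MvPolynomial.monomial γ (1 : K) ∉ M ∧ ∑ i, γ i * w i = ∑ i, α i * w i}.Finite :=
      (weight_fiber_finite n (∑ i, α i * w i) w hw).subset (fun γ hγ => hγ.2)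
    have h2le : 1 < {γ : Fin n →₀ ℕ |
        MvPolynomial.monomial γ (1 : K) ∉ M ∧ ∑ i, γ i * w i = ∑ i, α i * w i}.ncard := by
      rw [Set.one_lt_ncard hSfin]
      exact ⟨α, ⟨hα, rfl⟩, β, ⟨hβ, hab'.symm⟩, hne⟩
    have hHk : H (∑ i, α i * w i) = 0 ∨ H (∑ i, α i * w i) = 1 := by
      by_cases hkk : (∑ i, α i * w i) < k₀
      · exact h1 _ hkk
      · have hkk' : k₀ ≤ ∑ i, α i * w i := le_of_not_gt hkk
        have := hP _ hkk'
        rcases h2 ((∑ i, α i * w i) % d) (Nat.mod_lt _ hd) with hp | hp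
        · left
          rw [hp] at this; simp at this
          exact_mod_cast this
        · right
          rw [hp] at this; simp at this
          exact_mod_cast this
    rw [hH] at hHk
    omega
end

section
/- Let K be a field, R = K[x_1, …, x_n], fix positive integer weights w_1, …, w_n, and let ⪯ be a monomial order on ℕ^n (a multiplicative linear well-order) that refines the weight, i.e. w(α) < w(β) implies α ≺ β. For 0 ≠ f ∈ R let lm(f) ∈ ℕ^n denote its ⪯-largest exponent, and for an ideal I ⊆ R let Δ(I) = {α ∈ ℕ^n : α ≠ lm(f) for all nonzero f ∈ I} be its staircase. Suppose I has a finite generating set G such that: (a) G is a Gröbner basis of I with respect to ⪯, i.e. the monomials x^{lm(g)}, g ∈ G, generate the initial ideal of I (the ideal generated by all x^{lm(f)}, 0 ≠ f ∈ I); (b) condition (C1): every g ∈ G has exactly two monomials of highest weight in its support; (c) condition (C2): the map α ↦ w(α) is injective on Δ(I). Let Γ = {w(α) : α ∈ Δ(I)} ⊆ ℕ. Then there exists a surjective function ρ : R/I → Γ ∪ {−∞} such that for all f, g, h ∈ R/I: ρ(f) = −∞ iff f = 0; ρ(af) = ρ(f) for all nonzero a ∈ K; ρ(f + g) ≤ max{ρ(f),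 ρ(g)}; if ρ(f) < ρ(g) and h ≠ 0 then ρ(fh) < ρ(gh); if f, g are nonzero and ρ(f) = ρ(g), then there is a nonzero a ∈ K with ρ(f − ag) < ρ(g); and ρ(fg) = ρ(f) + ρ(g) (with −∞ + m = −∞). That is, R/I is an order domain with weight function ρ. -/
/-!
The weight function is `ρ (f + I) =` the largest weight of a monomial of the normal form of `f`,
the unique representative of `f + I` supported on the staircase `Δ` (Macaulay's basis theorem).
By (C2) a nonzero normal form has a unique monomial of maximal weight, which makes (O.1)–(O.3)
and (O.5) statements about the linear map `f + I ↦ normal form`.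

The heart is (O.6): the product of two normal forms again has a unique monomial of maximal
weight, and reducing it modulo `I` cannot change that weight, because no element of `I` has a
unique monomial of maximal weight. Indeed, such a monomial is the leading monomial of the element,
so it is divisible by the leading monomial of some `g ∈ G`; by (C1) `g` has exactly one further
monomial of maximal weight, and subtracting the matching multiple of `g` leaves an element of `I`
whose unique monomial of maximal weight is smaller for `⪯`. Well-foundedness ends the descent.
-/

open Finsupp

namespace MvPolynomial

variable {σ R K : Type*}

section LeadingExponent

variable [CommSemiring R] (r : (σ →₀ ℕ) → (σ →₀ ℕ) → Prop)

def IsLeadingExponent (f : MvPolynomial σ R) (α : σ →₀ ℕ) : Prop :=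
  α ∈ f.support ∧ ∀ β ∈ f.support, β ≠ α → r β α

def staircase (V : Set (MvPolynomial σ R)) : Set (σ →₀ ℕ) :=
  {α | ∀ f ∈ V, f ≠ 0 → ¬ IsLeadingExponent r f α}

variable {r}

theorem IsLeadingExponent.ne_zero {f : MvPolynomial σ R} {α : σ →₀ ℕ}
    (h : IsLeadingExponent r f α) : f ≠ 0 := by
  rintro rfl
  simpa using h.1

theorem exists_isLeadingExponent [IsStrictTotalOrder (σ →₀ ℕ) r] {f : MvPolynomial σ R}
    (hf : f ≠ 0) : ∃ α, IsLeadingExponent r f α := by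
  let _ : LE (σ →₀ ℕ) := ⟨fun a b => a = b ∨ r a b⟩
  have : IsTrans (σ →₀ ℕ) (· ≤ ·) := ⟨by
    rintro a b c (rfl | hab) (rfl | hbc)
    exacts [Or.inl rfl, Or.inr hbc, Or.inr hab, Or.inr (_root_.trans hab hbc)]⟩
  obtain ⟨α, hα, hmax⟩ := f.support.exists_maximal (Finset.nonempty_of_ne_empty (by simpa))
  refine ⟨α, hα, fun β hβ hne => ?_⟩
  rcases trichotomous_of r β α with h | rfl | h
  · exact h
  · exact absurd rfl hne
  · exact (hmax hβ (Or.inr h)).resolve_left hne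

theorem monomial_mem_span_leadingMonomials_iff {S : Set (MvPolynomial σ R)} {α : σ →₀ ℕ}
    [Nontrivial R] :
    monomial α (1 : R) ∈ Ideal.span {m | ∃ f ∈ S, f ≠ 0 ∧ ∃ β, IsLeadingExponent r f β ∧
      m = monomial β (1 : R)} ↔ ∃ f ∈ S, ∃ β, IsLeadingExponent r f β ∧ β ≤ α := by
  have hset : {m | ∃ f ∈ S, f ≠ 0 ∧ ∃ β, IsLeadingExponent r f β ∧ m = monomial β (1 : R)} =
      (fun β => monomial β (1 : R)) '' {β | ∃ f ∈ S, IsLeadingExponent r f β} := by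
    ext m
    constructor
    · rintro ⟨f, hf, -, β, hβ, rfl⟩
      exact ⟨β, ⟨f, hf, hβ⟩, rfl⟩
    · rintro ⟨β, ⟨f, hf, hβ⟩, rfl⟩
      exact ⟨f, hf, hβ.ne_zero, β, hβ, rfl⟩
  classical
  rw [hset, mem_ideal_span_monomial_image, support_monomial, if_neg one_ne_zero]
  simp only [Finset.mem_singleton, forall_eq, Set.mem_ofPred_eq]
  constructor
  · rintro ⟨β, ⟨f, hf, hβ⟩, hle⟩
    exact ⟨f, hf, β, hβ, hle⟩
  · rintro ⟨f, hf, β, hβ, hle⟩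
    exact ⟨β, ⟨f, hf, hβ⟩, hle⟩

theorem isLeadingExponent_monomial {α : σ →₀ ℕ} {c : R} (hc : c ≠ 0) :
    IsLeadingExponent r (monomial α c) α := by
  classical
  refine ⟨by simp [hc], fun β hβ hne => absurd ?_ hne⟩
  simpa [support_monomial, hc] using hβ

end LeadingExponent

section Macaulay

variable [Field K] {r : (σ →₀ ℕ) → (σ →₀ ℕ) → Prop}

theorem IsLeadingExponent.rel_of_mem_support_sub_smul {f g : MvPolynomial σ K} {α : σ →₀ ℕ}
    (hf : IsLeadingExponent r f α) (hg : IsLeadingExponent r g α) :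
    ∀ β ∈ (f - (f.coeff α / g.coeff α) • g).support, r β α := by
  classical
  intro β hβ
  have hgα : g.coeff α ≠ 0 := mem_support_iff.mp hg.1
  have hβα : β ≠ α := by
    rintro rfl
    simp [div_mul_cancel₀ _ hgα] at hβ
  rcases Finset.mem_union.mp (support_sub σ f _ hβ) with h | h
  · exact hf.2 β h hβα
  · exact hg.2 β (support_smul h) hβα

variable [IsStrictTotalOrder (σ →₀ ℕ) r]

theorem eq_top_of_forall_exists_isLeadingExponent (hwf : WellFounded r)
    {W : Submodule K (MvPolynomial σ K)} (hW : ∀ α, ∃ g ∈ W, IsLeadingExponent r g α) :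
    W = ⊤ := by
  have key : ∀ α, ∀ f, IsLeadingExponent r f α → f ∈ W := by
    intro α
    induction α using hwf.induction with
    | _ α ih =>
    intro f hf
    obtain ⟨g, hgW, hg⟩ := hW α
    set f' := f - (f.coeff α / g.coeff α) • g
    have hf' : f = f' + (f.coeff α / g.coeff α) • g := by simp [f']
    rw [hf']
    refine W.add_mem ?_ (W.smul_mem _ hgW)
    by_cases h0 : f' = 0
    · rw [h0]; exact W.zero_mem
    obtain ⟨α', hα'⟩ := exists_isLeadingExponent (r := r) h0
    exact ih α' (hf.rel_of_mem_support_sub_smul hg α' hα'.1) f' hα'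
  refine Submodule.eq_top_iff'.mpr fun f => ?_
  by_cases h0 : f = 0
  · rw [h0]; exact W.zero_mem
  obtain ⟨α, hα⟩ := exists_isLeadingExponent (r := r) h0
  exact key α f hα

theorem isCompl_restrictSupport_staircase (hwf : WellFounded r)
    (V : Submodule K (MvPolynomial σ K)) :
    IsCompl V (restrictSupport K (staircase r (V : Set (MvPolynomial σ K)))) := by
  constructor
  · refine Submodule.disjoint_def.mpr fun f hfV hfΔ => by_contra fun h0 => ?_
    obtain ⟨α, hα⟩ := exists_isLeadingExponent (r := r) h0
    exact ((mem_restrictSupport_iff K).mp hfΔ) hα.1 f hfV h0 hα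
  · refine codisjoint_iff.mpr (eq_top_of_forall_exists_isLeadingExponent hwf fun α => ?_)
    by_cases hα : α ∈ staircase r (V : Set (MvPolynomial σ K))
    · exact ⟨monomial α 1, Submodule.mem_sup_right (by simp [hα]),
        isLeadingExponent_monomial one_ne_zero⟩
    · simp only [staircase, Set.mem_ofPred_eq, not_forall, not_not] at hα
      obtain ⟨f, hfV, -, hf⟩ := hα
      exact ⟨f, Submodule.mem_sup_left hfV, hf⟩

end Macaulay

section Weight

variable (w : σ → ℕ)

def IsUniqueMaxWeight [CommSemiring R] (p : MvPolynomial σ R) (α : σ →₀ ℕ) : Prop :=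
  α ∈ p.support ∧ ∀ β ∈ p.support, β ≠ α → weight w β < weight w α

def IsMaxWeightPair [CommSemiring R] (p : MvPolynomial σ R) (α τ : σ →₀ ℕ) : Prop :=
  α ∈ p.support ∧ τ ∈ p.support ∧ τ ≠ α ∧ weight w τ = weight w α ∧
    ∀ β ∈ p.support, β ≠ α → β ≠ τ → weight w β < weight w α

variable {w}

section CommSemiring

variable [CommSemiring R] {p q : MvPolynomial σ R} {α β : σ →₀ ℕ}

theorem IsUniqueMaxWeight.weight_le (hp : IsUniqueMaxWeight w p α) :
    ∀ β ∈ p.support, weight w β ≤ weight w α := by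
  intro β hβ
  rcases eq_or_ne β α with rfl | hne
  exacts [le_rfl, (hp.2 β hβ hne).le]

theorem IsUniqueMaxWeight.weightedTotalDegree'_eq (hp : IsUniqueMaxWeight w p α) :
    weightedTotalDegree' w p = weight w α :=
  le_antisymm (Finset.sup_le fun β hβ => WithBot.coe_le_coe.mpr (hp.weight_le β hβ))
    (Finset.le_sup (f := fun β => (weight w β : WithBot ℕ)) hp.1)

theorem IsUniqueMaxWeight.isLeadingExponent {r : (σ →₀ ℕ) → (σ →₀ ℕ) → Prop}
    (hrw : ∀ a b, weight w a < weight w b → r a b) (hp : IsUniqueMaxWeight w p α) :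
    IsLeadingExponent r p α :=
  ⟨hp.1, fun β hβ hne => hrw β α (hp.2 β hβ hne)⟩

theorem exists_isUniqueMaxWeight (hp : p ≠ 0)
    (hinj : Set.InjOn (weight w) (p.support : Set (σ →₀ ℕ))) :
    ∃ α, IsUniqueMaxWeight w p α := by
  obtain ⟨α, hα, hmax⟩ :=
    p.support.exists_max_image (weight w) (Finset.nonempty_of_ne_empty (by simpa))
  exact ⟨α, hα, fun β hβ hne =>
    (hmax β hβ).lt_of_ne fun h => hne (hinj (Finset.mem_coe.mpr hβ) (Finset.mem_coe.mpr hα) h)⟩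

theorem IsUniqueMaxWeight.mul [NoZeroDivisors R] (hp : IsUniqueMaxWeight w p α)
    (hq : IsUniqueMaxWeight w q β) : IsUniqueMaxWeight w (p * q) (α + β) := by
  classical
  have key : ∀ τ₁ ∈ p.support, ∀ τ₂ ∈ q.support, (τ₁, τ₂) ≠ (α, β) →
      weight w τ₁ + weight w τ₂ < weight w α + weight w β := by
    intro τ₁ h₁ τ₂ h₂ hne
    rcases eq_or_ne τ₁ α with rfl | h₁α
    · exact Nat.add_lt_add_left (hq.2 τ₂ h₂ fun h => hne (by rw [h])) _
    · exact Nat.add_lt_add_of_lt_of_le (hp.2 τ₁ h₁ h₁α) (hq.weight_le τ₂ h₂)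
  have hcoeff : (p * q).coeff (α + β) = p.coeff α * q.coeff β := by
    rw [coeff_mul]
    refine Finset.sum_eq_single_of_mem (α, β) (Finset.HasAntidiagonal.mem_antidiagonal.mpr rfl) ?_
    rintro ⟨τ₁, τ₂⟩ hτ hne
    by_contra h0
    have h₁ : τ₁ ∈ p.support := mem_support_iff.mpr (left_ne_zero_of_mul h0)
    have h₂ : τ₂ ∈ q.support := mem_support_iff.mpr (right_ne_zero_of_mul h0)
    have := key τ₁ h₁ τ₂ h₂ hne
    rw [← map_add, ← map_add, Finset.HasAntidiagonal.mem_antidiagonal.mp hτ] at this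
    exact this.false
  refine ⟨mem_support_iff.mpr ?_, fun τ hτ hne => ?_⟩
  · rw [hcoeff]
    exact mul_ne_zero (mem_support_iff.mp hp.1) (mem_support_iff.mp hq.1)
  · obtain ⟨τ₁, h₁, τ₂, h₂, rfl⟩ := Finset.mem_add.mp (support_mul p q hτ)
    rw [map_add, map_add]
    exact key τ₁ h₁ τ₂ h₂ fun h => hne (by simp_all)

theorem IsMaxWeightPair.monomial_mul [NoZeroDivisors R] {γ α τ : σ →₀ ℕ} {c : R} (hc : c ≠ 0)
    (hp : IsMaxWeightPair w p α τ) :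
    IsMaxWeightPair w (monomial γ c * p) (α + γ) (τ + γ) := by
  classical
  obtain ⟨hα, hτ, hτα, hτw, htop⟩ := hp
  have hmem : ∀ δ ∈ p.support, δ + γ ∈ (monomial γ c * p).support := fun δ hδ => by
    rw [mem_support_iff, add_comm, coeff_monomial_mul]
    exact mul_ne_zero hc (mem_support_iff.mp hδ)
  refine ⟨hmem α hα, hmem τ hτ, fun h => hτα (add_right_cancel h), by simp [hτw], ?_⟩
  intro β hβ hβα hβτ
  obtain ⟨γ', hγ', δ, hδ, rfl⟩ := Finset.mem_add.mp (support_mul _ _ hβ)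
  obtain rfl : γ' = γ := Finset.mem_singleton.mp (support_monomial_subset hγ')
  rw [add_comm] at hβα hβτ ⊢
  rw [map_add, map_add]
  exact Nat.add_lt_add_right
    (htop δ hδ (fun h => hβα (by rw [h])) (fun h => hβτ (by rw [h]))) _

end CommSemiring

section CommRing

variable [CommRing R] {h p q : MvPolynomial σ R} {α τ : σ →₀ ℕ}

theorem IsUniqueMaxWeight.sub_of_weightedTotalDegree'_lt (hp : IsUniqueMaxWeight w p α)
    (hq : weightedTotalDegree' w q < weight w α) : IsUniqueMaxWeight w (p - q) α := by
  classical
  have hlt : ∀ β ∈ q.support, weight w β < weight w α := fun β hβ =>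
    WithBot.coe_lt_coe.mp ((Finset.le_sup (f := fun β => (weight w β : WithBot ℕ)) hβ).trans_lt hq)
  refine ⟨?_, fun β hβ hne => ?_⟩
  · rw [mem_support_iff, coeff_sub,
      notMem_support_iff.mp fun h => (hlt α h).false, sub_zero]
    exact mem_support_iff.mp hp.1
  · rcases Finset.mem_union.mp (support_sub σ p q hβ) with h | h
    exacts [hp.2 β h hne, hlt β h]

theorem IsUniqueMaxWeight.sub_of_isMaxWeightPair (hh : IsUniqueMaxWeight w h α)
    (hq : IsMaxWeightPair w q α τ) (hcoeff : q.coeff α = h.coeff α) :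
    IsUniqueMaxWeight w (h - q) τ := by
  classical
  obtain ⟨-, hτ, hτα, hτw, htop⟩ := hq
  have hατ : (h - q).coeff α = 0 := by rw [coeff_sub, hcoeff, sub_self]
  refine ⟨?_, fun β hβ hβτ => ?_⟩
  · have hhτ : h.coeff τ = 0 :=
      notMem_support_iff.mp fun hmem => (hh.2 τ hmem hτα).ne hτw
    rw [mem_support_iff, coeff_sub, hhτ, zero_sub, neg_ne_zero]
    exact mem_support_iff.mp hτ
  · have hβα : β ≠ α := by
      rintro rfl
      exact mem_support_iff.mp hβ hατ
    rw [hτw]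
    rcases Finset.mem_union.mp (support_sub σ h q hβ) with hmem | hmem
    exacts [hh.2 β hmem hβα, htop β hmem hβα hβτ]

end CommRing

theorem IsUniqueMaxWeight.weightedTotalDegree'_sub_smul_lt [Field K] {p q : MvPolynomial σ K}
    {α : σ →₀ ℕ} (hp : IsUniqueMaxWeight w p α) (hq : IsUniqueMaxWeight w q α) :
    weightedTotalDegree' w (p - (p.coeff α / q.coeff α) • q) < weight w α := by
  classical
  refine (Finset.sup_lt_iff (WithBot.bot_lt_coe _)).mpr fun β hβ => WithBot.coe_lt_coe.mpr ?_
  have hβα : β ≠ α := by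
    rintro rfl
    simp [div_mul_cancel₀ _ (mem_support_iff.mp hq.1)] at hβ
  rcases Finset.mem_union.mp (support_sub σ p _ hβ) with h | h
  exacts [hp.2 β h hβα, hq.2 β (support_smul h) hβα]

end Weight

section Groebner

variable {r : (σ →₀ ℕ) → (σ →₀ ℕ) → Prop} {w : σ → ℕ}

theorem IsLeadingExponent.weight_le [CommSemiring R] [Std.Asymm r]
    (hrw : ∀ a b, weight w a < weight w b → r a b) {g : MvPolynomial σ R} {s : σ →₀ ℕ}
    (hs : IsLeadingExponent r g s) : ∀ β ∈ g.support, weight w β ≤ weight w s := by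
  intro β hβ
  refine le_of_not_gt fun hlt => ?_
  rcases eq_or_ne β s with rfl | hne
  · exact hlt.false
  · exact asymm (hs.2 β hβ hne) (hrw s β hlt)

theorem IsLeadingExponent.exists_isMaxWeightPair [CommSemiring R] [Std.Asymm r]
    (hrw : ∀ a b, weight w a < weight w b → r a b) {g : MvPolynomial σ R} {s : σ →₀ ℕ}
    (hs : IsLeadingExponent r g s)
    (hg : (g.support.filter (fun α => weight w α = g.support.sup (weight w))).card = 2) :
    ∃ μ, IsMaxWeightPair w g s μ := by
  have hsup : g.support.sup (weight w) = weight w s :=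
    le_antisymm (Finset.sup_le (hs.weight_le hrw)) (Finset.le_sup hs.1)
  simp only [hsup] at hg
  set T := g.support.filter (fun α => weight w α = weight w s)
  have hsT : s ∈ T := Finset.mem_filter.mpr ⟨hs.1, rfl⟩
  obtain ⟨μ, hμT, hμs⟩ := Finset.exists_mem_ne (s := T) (by omega) s
  obtain ⟨hμ, hμw⟩ := Finset.mem_filter.mp hμT
  refine ⟨μ, hs.1, hμ, hμs, hμw, fun δ hδ hδs hδμ =>
    (hs.weight_le hrw δ hδ).lt_of_ne fun hδw => ?_⟩
  have hδT : δ ∈ T := Finset.mem_filter.mpr ⟨hδ, hδw⟩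
  have := Finset.two_lt_card.mpr ⟨s, hsT, μ, hμT, δ, hδT, hμs.symm, hδs.symm, hδμ.symm⟩
  omega

theorem not_isUniqueMaxWeight_of_mem [Field K] [Std.Asymm r] (hwf : WellFounded r)
    (hadd : ∀ a b c, r a b → r (a + c) (b + c)) (hrw : ∀ a b, weight w a < weight w b → r a b)
    {I : Ideal (MvPolynomial σ K)} {G : Set (MvPolynomial σ K)} (hGI : ∀ g ∈ G, g ∈ I)
    (hGB : ∀ α ∉ staircase r (I : Set (MvPolynomial σ K)),
      ∃ g ∈ G, ∃ s, IsLeadingExponent r g s ∧ s ≤ α)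
    (hC1 : ∀ g ∈ G, (g.support.filter (fun α => weight w α = g.support.sup (weight w))).card = 2)
    (α : σ →₀ ℕ) {h : MvPolynomial σ K} (hI : h ∈ I) : ¬ IsUniqueMaxWeight w h α := by
  induction α using hwf.induction generalizing h with
  | _ α ih =>
  intro hh
  have hlead := hh.isLeadingExponent hrw
  obtain ⟨g, hgG, s, hs, hsα⟩ := hGB α fun hα => hα h hI hlead.ne_zero hlead
  obtain ⟨μ, hpair⟩ := hs.exists_isMaxWeightPair hrw (hC1 g hgG)
  obtain ⟨γ, rfl⟩ := exists_add_of_le hsα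
  have hgs : g.coeff s ≠ 0 := mem_support_iff.mp hs.1
  have hc : h.coeff (s + γ) / g.coeff s ≠ 0 := div_ne_zero (mem_support_iff.mp hh.1) hgs
  have hμs : r μ s := hs.2 μ hpair.2.1 hpair.2.2.1
  refine ih (μ + γ) (hadd μ s γ hμs) (I.sub_mem hI (I.mul_mem_left _ (hGI g hgG)))
    (hh.sub_of_isMaxWeightPair (hpair.monomial_mul (γ := γ) hc) ?_)
  rw [add_comm, coeff_monomial_mul, div_mul_cancel₀ _ hgs]

theorem IsUniqueMaxWeight.weightedTotalDegree'_eq_of_sub_mem [CommRing R]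
    {I : Ideal (MvPolynomial σ R)} (hI : ∀ α, ∀ f ∈ I, ¬ IsUniqueMaxWeight w f α)
    {p q : MvPolynomial σ R} {α : σ →₀ ℕ}
    (hp : IsUniqueMaxWeight w p α) (hq : Set.InjOn (weight w) (q.support : Set (σ →₀ ℕ)))
    (hpq : p - q ∈ I) : weightedTotalDegree' w q = weight w α := by
  have hq0 : q ≠ 0 := by
    rintro rfl
    exact hI α p (by simpa using hpq) hp
  obtain ⟨β, hβ⟩ := exists_isUniqueMaxWeight hq0 hq
  rw [hβ.weightedTotalDegree'_eq, Nat.cast_inj]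
  rcases lt_trichotomy (weight w β) (weight w α) with hlt | heq | hgt
  · refine (hI α _ hpq (hp.sub_of_weightedTotalDegree'_lt ?_)).elim
    rw [hβ.weightedTotalDegree'_eq]
    exact WithBot.coe_lt_coe.mpr hlt
  · exact heq
  · refine (hI β _ (by simpa using I.neg_mem hpq) (hβ.sub_of_weightedTotalDegree'_lt ?_)).elim
    rw [hp.weightedTotalDegree'_eq]
    exact WithBot.coe_lt_coe.mpr hgt

end Groebner

theorem weightedTotalDegree'_add_le {M : Type*} [AddCommMonoid M] [SemilatticeSup M]
    [CommSemiring R] (w : σ → M) (p q : MvPolynomial σ R) :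
    weightedTotalDegree' w (p + q) ≤ max (weightedTotalDegree' w p) (weightedTotalDegree' w q) := by
  classical
  refine Finset.sup_le fun β hβ => ?_
  rcases Finset.mem_union.mp (support_add hβ) with h | h
  · exact (Finset.le_sup (f := fun β => (weight w β : WithBot M)) h).trans le_sup_left
  · exact (Finset.le_sup (f := fun β => (weight w β : WithBot M)) h).trans le_sup_right

theorem weightedTotalDegree'_smul {M : Type*} [AddCommMonoid M] [SemilatticeSup M] [Field K]
    (w : σ → M) {a : K} (ha : a ≠ 0)
    (p : MvPolynomial σ K) : weightedTotalDegree' w (a • p) = weightedTotalDegree' w p := by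
  rw [weightedTotalDegree', weightedTotalDegree', support_smul_eq ha]

section WeightFunction

variable [Field K] {r : (σ →₀ ℕ) → (σ →₀ ℕ) → Prop} [IsStrictTotalOrder (σ →₀ ℕ) r]
  (hwf : WellFounded r) (w : σ → ℕ) (I : Ideal (MvPolynomial σ K))

noncomputable def normalForm :
    (MvPolynomial σ K ⧸ I) ≃ₗ[K] restrictSupport K (staircase r (I : Set (MvPolynomial σ K))) :=
  (Submodule.Quotient.restrictScalarsEquiv K I).symm ≪≫ₗ
    Submodule.quotientEquivOfIsCompl _ _
      (isCompl_restrictSupport_staircase hwf (I.restrictScalars K))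

noncomputable def weightFunction (x : MvPolynomial σ K ⧸ I) : WithBot ℕ :=
  weightedTotalDegree' w (normalForm hwf I x : MvPolynomial σ K)

variable {w I}

theorem mk_normalForm (x : MvPolynomial σ K ⧸ I) :
    Ideal.Quotient.mk I (normalForm hwf I x : MvPolynomial σ K) = x :=
  (Submodule.Quotient.restrictScalarsEquiv K I).symm.injective
    (Submodule.mk_quotientEquivOfIsCompl_apply
      (isCompl_restrictSupport_staircase hwf (I.restrictScalars K)) _)

theorem normalForm_mk_of_mem {p : MvPolynomial σ K}
    (hp : p ∈ restrictSupport K (staircase r (I : Set (MvPolynomial σ K)))) :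
    normalForm hwf I (Ideal.Quotient.mk I p) = ⟨p, hp⟩ :=
  Submodule.quotientEquivOfIsCompl_apply_mk_right
    (isCompl_restrictSupport_staircase hwf (I.restrictScalars K)) ⟨p, hp⟩

theorem weightFunction_eq_bot_iff (x : MvPolynomial σ K ⧸ I) :
    weightFunction hwf w I x = ⊥ ↔ x = 0 := by
  rw [weightFunction, weightedTotalDegree'_eq_bot_iff, ZeroMemClass.coe_eq_zero,
    LinearEquiv.map_eq_zero_iff]

theorem weightFunction_smul {a : K} (ha : a ≠ 0) (x : MvPolynomial σ K ⧸ I) :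
    weightFunction hwf w I (a • x) = weightFunction hwf w I x := by
  rw [weightFunction, weightFunction, map_smul, Submodule.coe_smul, weightedTotalDegree'_smul w ha]

theorem weightFunction_add_le (x y : MvPolynomial σ K ⧸ I) :
    weightFunction hwf w I (x + y) ≤ max (weightFunction hwf w I x) (weightFunction hwf w I y) := by
  rw [weightFunction, map_add, Submodule.coe_add]
  exact weightedTotalDegree'_add_le w _ _

variable (hC2 : Set.InjOn (weight w) (staircase r (I : Set (MvPolynomial σ K))))
include hC2

theorem exists_isUniqueMaxWeight_normalForm {x : MvPolynomial σ K ⧸ I} (hx : x ≠ 0) :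
    ∃ α ∈ staircase r (I : Set (MvPolynomial σ K)),
      IsUniqueMaxWeight w (normalForm hwf I x : MvPolynomial σ K) α := by
  have hsupp := (mem_restrictSupport_iff K).mp (normalForm hwf I x).2
  obtain ⟨α, hα⟩ := exists_isUniqueMaxWeight (by simpa using hx) (hC2.mono hsupp)
  exact ⟨α, hsupp hα.1, hα⟩

theorem range_weightFunction :
    Set.range (weightFunction hwf w I) =
      insert ⊥ ((↑) '' (weight w '' staircase r (I : Set (MvPolynomial σ K)))) := by
  ext v
  constructor
  · rintro ⟨x, rfl⟩
    rcases eq_or_ne x 0 with rfl | hx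
    · exact Or.inl ((weightFunction_eq_bot_iff hwf 0).mpr rfl)
    obtain ⟨α, hαΔ, hα⟩ := exists_isUniqueMaxWeight_normalForm hwf hC2 hx
    exact Or.inr ⟨_, ⟨α, hαΔ, rfl⟩, hα.weightedTotalDegree'_eq.symm⟩
  · rintro (rfl | ⟨_, ⟨α, hα, rfl⟩, rfl⟩)
    · exact ⟨0, (weightFunction_eq_bot_iff hwf 0).mpr rfl⟩
    refine ⟨Ideal.Quotient.mk I (monomial α 1), ?_⟩
    rw [weightFunction, normalForm_mk_of_mem hwf (by simp [hα])]
    exact IsWeightedHomogeneous.weighted_total_degree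
      (isWeightedHomogeneous_monomial w α 1 rfl) (monomial_eq_zero.not.mpr one_ne_zero)

theorem exists_weightFunction_sub_smul_lt {x y : MvPolynomial σ K ⧸ I} (hx : x ≠ 0) (hy : y ≠ 0)
    (hxy : weightFunction hwf w I x = weightFunction hwf w I y) :
    ∃ a : K, a ≠ 0 ∧ weightFunction hwf w I (x - a • y) < weightFunction hwf w I y := by
  obtain ⟨α, hαΔ, hα⟩ := exists_isUniqueMaxWeight_normalForm hwf hC2 hx
  obtain ⟨β, hβΔ, hβ⟩ := exists_isUniqueMaxWeight_normalForm hwf hC2 hy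
  rw [weightFunction, weightFunction, hα.weightedTotalDegree'_eq, hβ.weightedTotalDegree'_eq,
    Nat.cast_inj] at hxy
  obtain rfl := hC2 hαΔ hβΔ hxy
  refine ⟨_, div_ne_zero (mem_support_iff.mp hα.1) (mem_support_iff.mp hβ.1), ?_⟩
  rw [weightFunction, weightFunction, map_sub, map_smul, Submodule.coe_sub, Submodule.coe_smul,
    hβ.weightedTotalDegree'_eq]
  exact hα.weightedTotalDegree'_sub_smul_lt hβ

theorem weightFunction_mul (hI : ∀ α, ∀ f ∈ I, ¬ IsUniqueMaxWeight w f α)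
    (x y : MvPolynomial σ K ⧸ I) :
    weightFunction hwf w I (x * y) = weightFunction hwf w I x + weightFunction hwf w I y := by
  rcases eq_or_ne x 0 with rfl | hx
  · simp [(weightFunction_eq_bot_iff hwf _).mpr rfl]
  rcases eq_or_ne y 0 with rfl | hy
  · simp [(weightFunction_eq_bot_iff hwf _).mpr rfl]
  obtain ⟨α, -, hα⟩ := exists_isUniqueMaxWeight_normalForm hwf hC2 hx
  obtain ⟨β, -, hβ⟩ := exists_isUniqueMaxWeight_normalForm hwf hC2 hy
  set p := (normalForm hwf I x : MvPolynomial σ K)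
  set q := (normalForm hwf I y : MvPolynomial σ K)
  have hxy : x * y = Ideal.Quotient.mk I (p * q) := by
    rw [map_mul, mk_normalForm, mk_normalForm]
  have hnf := (normalForm hwf I (x * y)).2
  rw [weightFunction, weightFunction, weightFunction, hα.weightedTotalDegree'_eq,
    hβ.weightedTotalDegree'_eq, ← Nat.cast_add, ← map_add]
  refine (hα.mul hβ).weightedTotalDegree'_eq_of_sub_mem hI
    (hC2.mono ((mem_restrictSupport_iff K).mp hnf)) ?_
  rw [hxy]
  exact Ideal.Quotient.eq.mp (mk_normalForm hwf _).symm

theorem weightFunction_mul_lt_mul (hI : ∀ α, ∀ f ∈ I, ¬ IsUniqueMaxWeight w f α)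
    {x y z : MvPolynomial σ K ⧸ I} (hxy : weightFunction hwf w I x < weightFunction hwf w I y)
    (hz : z ≠ 0) :
    weightFunction hwf w I (x * z) < weightFunction hwf w I (y * z) := by
  rw [weightFunction_mul hwf hC2 hI, weightFunction_mul hwf hC2 hI]
  exact WithBot.add_lt_add_right (mt (weightFunction_eq_bot_iff hwf z).mp hz) hxy

end WeightFunction


end MvPolynomial

theorem stmt_3_general (n : ℕ) (w : Fin n → ℕ)
    (K : Type*) [Field K]
    (wdeg : (Fin n →₀ ℕ) → ℕ) (hwdeg : ∀ α, wdeg α = ∑ i, α i * w i)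
    -- the monomial order
    (r : (Fin n →₀ ℕ) → (Fin n →₀ ℕ) → Prop)
    (hr_sto : IsStrictTotalOrder (Fin n →₀ ℕ) r)
    (hr_wf : WellFounded r)
    (hr_add : ∀ a b c : Fin n →₀ ℕ, r a b → r (a + c) (b + c))
    (hr_w : ∀ a b : Fin n →₀ ℕ, wdeg a < wdeg b → r a b)
    -- leading monomials and the staircase
    (IsLM : MvPolynomial (Fin n) K → (Fin n →₀ ℕ) → Prop)
    (hIsLM : ∀ f α, IsLM f α ↔ (α ∈ f.support ∧ ∀ β ∈ f.support, β ≠ α → r β α))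
    (I : Ideal (MvPolynomial (Fin n) K))
    (Δ : Set (Fin n →₀ ℕ))
    (hΔ : Δ = {α | ∀ f ∈ I, f ≠ 0 → ¬ IsLM f α})
    -- G is a finite generating set of I which is a Gröbner basis for I w.r.t. r
    (G : Finset (MvPolynomial (Fin n) K))
    (hG : I = Ideal.span (G : Set (MvPolynomial (Fin n) K)))
    (hGB : Ideal.span {m : MvPolynomial (Fin n) K |
        ∃ g ∈ G, g ≠ 0 ∧ ∃ α, IsLM g α ∧ m = MvPolynomial.monomial α (1 : K)} =
      Ideal.span {m : MvPolynomial (Fin n) K |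
        ∃ f ∈ I, f ≠ 0 ∧ ∃ α, IsLM f α ∧ m = MvPolynomial.monomial α (1 : K)})
    -- (C1)
    (hC1 : ∀ g ∈ G, (g.support.filter (fun α => wdeg α = g.support.sup wdeg)).card = 2)
    -- (C2)
    (hC2 : Set.InjOn wdeg Δ)
    (Γ : Set ℕ) (hΓ : Γ = wdeg '' Δ) :
    ∃ ρ : (MvPolynomial (Fin n) K ⧸ I) → WithBot ℕ,
      -- surjectivity onto Γ ∪ {-∞}
      Set.range ρ = insert ⊥ ((fun m : ℕ => (m : WithBot ℕ)) '' Γ) ∧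
      -- (O.1)
      (∀ f, ρ f = ⊥ ↔ f = 0) ∧
      -- (O.2)
      (∀ (a : K), a ≠ 0 → ∀ f, ρ (a • f) = ρ f) ∧
      -- (O.3)
      (∀ f g, ρ (f + g) ≤ max (ρ f) (ρ g)) ∧
      -- (O.4)
      (∀ f g h, ρ f < ρ g → h ≠ 0 → ρ (f * h) < ρ (g * h)) ∧
      -- (O.5)
      (∀ f g, f ≠ 0 → g ≠ 0 → ρ f = ρ g → ∃ a : K, a ≠ 0 ∧ ρ (f - a • g) < ρ g) ∧
      -- (O.6)
      (∀ f g, ρ (f * g) = ρ f + ρ g) := by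
  obtain rfl : wdeg = Finsupp.weight w := funext fun α => by
    simp [hwdeg, Finsupp.weight_apply, Finsupp.sum_fintype]
  obtain rfl : IsLM = MvPolynomial.IsLeadingExponent r := funext₂ fun f α => propext (hIsLM f α)
  subst hΔ hΓ
  have hGB' : ∀ α ∉ MvPolynomial.staircase r (I : Set (MvPolynomial (Fin n) K)),
      ∃ g ∈ (G : Set (MvPolynomial (Fin n) K)), ∃ s,
        MvPolynomial.IsLeadingExponent r g s ∧ s ≤ α := by
    intro α hα
    obtain ⟨f, hfI, -, hf⟩ : ∃ f ∈ I, f ≠ 0 ∧ MvPolynomial.IsLeadingExponent r f α := by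
      simpa [MvPolynomial.staircase] using hα
    exact MvPolynomial.monomial_mem_span_leadingMonomials_iff.mp
      (hGB ▸ MvPolynomial.monomial_mem_span_leadingMonomials_iff.mpr ⟨f, hfI, α, hf, le_rfl⟩)
  have hI := MvPolynomial.not_isUniqueMaxWeight_of_mem hr_wf hr_add hr_w
    (fun g hg => hG ▸ Ideal.subset_span hg) hGB' hC1
  exact ⟨MvPolynomial.weightFunction hr_wf w I,
    MvPolynomial.range_weightFunction hr_wf hC2,
    MvPolynomial.weightFunction_eq_bot_iff hr_wf,
    fun a ha => MvPolynomial.weightFunction_smul hr_wf ha,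
    MvPolynomial.weightFunction_add_le hr_wf,
    fun f g h => MvPolynomial.weightFunction_mul_lt_mul hr_wf hC2 hI,
    fun f g => MvPolynomial.exists_weightFunction_sub_smul_lt hr_wf hC2,
    MvPolynomial.weightFunction_mul hr_wf hC2 hI⟩

/-- Let `R = K[x_1,…,x_n]` with positive weights `w`, and let `≺` (here `r`)
be a monomial order (multiplicative strict linear well-order) on `ℕ^n` refining the weight.
If an ideal `I` has a finite generating set `G` that is a Gröbner basis w.r.t. `≺`,
and the order-domain conditions (C1) (each `g ∈ G` has exactly two monomials of highest
weight) and (C2) (the weight is injective on the staircase `Δ(I)`) hold, then `R/I` is an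
order domain: there is a surjective weight function `ρ : R/I → Γ ∪ {-∞}` (with
`Γ = w(Δ(I))`) satisfying (O.1)–(O.6). -/
theorem stmt_3 (n : ℕ) (hn : 1 ≤ n) (w : Fin n → ℕ) (hw : ∀ i, 0 < w i)
    (K : Type*) [Field K]
    (wdeg : (Fin n →₀ ℕ) → ℕ) (hwdeg : ∀ α, wdeg α = ∑ i, α i * w i)
    -- the monomial order
    (r : (Fin n →₀ ℕ) → (Fin n →₀ ℕ) → Prop)
    (hr_sto : IsStrictTotalOrder (Fin n →₀ ℕ) r)
    (hr_wf : WellFounded r)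
    (hr_add : ∀ a b c : Fin n →₀ ℕ, r a b → r (a + c) (b + c))
    (hr_w : ∀ a b : Fin n →₀ ℕ, wdeg a < wdeg b → r a b)
    -- leading monomials and the staircase
    (IsLM : MvPolynomial (Fin n) K → (Fin n →₀ ℕ) → Prop)
    (hIsLM : ∀ f α, IsLM f α ↔ (α ∈ f.support ∧ ∀ β ∈ f.support, β ≠ α → r β α))
    (I : Ideal (MvPolynomial (Fin n) K))
    (Δ : Set (Fin n →₀ ℕ))
    (hΔ : Δ = {α | ∀ f ∈ I, f ≠ 0 → ¬ IsLM f α})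
    -- G is a finite generating set of I which is a Gröbner basis for I w.r.t. r
    (G : Finset (MvPolynomial (Fin n) K))
    (hG : I = Ideal.span (G : Set (MvPolynomial (Fin n) K)))
    (hGB : Ideal.span {m : MvPolynomial (Fin n) K |
        ∃ g ∈ G, g ≠ 0 ∧ ∃ α, IsLM g α ∧ m = MvPolynomial.monomial α (1 : K)} =
      Ideal.span {m : MvPolynomial (Fin n) K |
        ∃ f ∈ I, f ≠ 0 ∧ ∃ α, IsLM f α ∧ m = MvPolynomial.monomial α (1 : K)})
    -- (C1)
    (hC1 : ∀ g ∈ G, (g.support.filter (fun α => wdeg α = g.support.sup wdeg)).card = 2)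
    -- (C2)
    (hC2 : Set.InjOn wdeg Δ)
    (Γ : Set ℕ) (hΓ : Γ = wdeg '' Δ) :
    ∃ ρ : (MvPolynomial (Fin n) K ⧸ I) → WithBot ℕ,
      -- surjectivity onto Γ ∪ {-∞}
      Set.range ρ = insert ⊥ ((fun m : ℕ => (m : WithBot ℕ)) '' Γ) ∧
      -- (O.1)
      (∀ f, ρ f = ⊥ ↔ f = 0) ∧
      -- (O.2)
      (∀ (a : K), a ≠ 0 → ∀ f, ρ (a • f) = ρ f) ∧
      -- (O.3)
      (∀ f g, ρ (f + g) ≤ max (ρ f) (ρ g)) ∧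
      -- (O.4)
      (∀ f g h, ρ f < ρ g → h ≠ 0 → ρ (f * h) < ρ (g * h)) ∧
      -- (O.5)
      (∀ f g, f ≠ 0 → g ≠ 0 → ρ f = ρ g → ∃ a : K, a ≠ 0 ∧ ρ (f - a • g) < ρ g) ∧
      -- (O.6)
      (∀ f g, ρ (f * g) = ρ f + ρ g) :=
  stmt_3_general n w K wdeg hwdeg r hr_sto hr_wf hr_add hr_w IsLM hIsLM I Δ hΔ G hG hGB hC1 hC2 Γ hΓ
end

section
/- Let K be a field, R = K[x_1, …, x_n], fix positive integer weights w_1, …, w_n, and let M ⊆ R be a monomial ideal generated by monomials involving only the variables x_1, …, x_{n−1} (i.e. by monomials x^α with α_n = 0). Let H(k) = #{α in the staircase of M : w(α) = k}. Suppose there are d ≥ 1, k_0 ∈ ℕ and polynomials P_0, …, P_{d−1} ∈ ℚ[x], each equal to the constant polynomial 0 or the constant polynomial 1, with H(k) = P_{k mod d}(k) for all k ≥ k_0. Then H(k) ∈ {0, 1} for all k ≥ 0. -/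
/-- Let `M ⊆ K[x_1,…,x_n]` be a monomial ideal generated by monomials not
involving the last variable `x_n`, with weighted Hilbert function `H`.  If `H` agrees, for
all `k ≥ k₀`, with a quasi-polynomial `P_0, …, P_{d-1}` each of which is the constant `0`
or the constant `1`, then `H(k) ∈ {0,1}` for every `k ≥ 0`. -/
theorem stmt_4 (n : ℕ) (hn : 1 ≤ n) (w : Fin n → ℕ) (hw : ∀ i, 0 < w i)
    (K : Type*) [Field K]
    (M : Ideal (MvPolynomial (Fin n) K))
    (hM : ∃ S : Set (Fin n →₀ ℕ),
      (∀ α ∈ S, α ⟨n - 1, by omega⟩ = 0) ∧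
      M = Ideal.span ((fun α => MvPolynomial.monomial α (1 : K)) '' S))
    (H : ℕ → ℕ)
    (hH : ∀ k, H k = Set.ncard {α : Fin n →₀ ℕ |
      MvPolynomial.monomial α (1 : K) ∉ M ∧ ∑ i, α i * w i = k})
    (d : ℕ) (hd : 1 ≤ d) (k₀ : ℕ) (P : ℕ → Polynomial ℚ)
    (hP01 : ∀ i, i < d → P i = 0 ∨ P i = 1)
    (hP : ∀ k, k₀ ≤ k → (H k : ℚ) = (P (k % d)).eval (k : ℚ)) :
    ∀ k : ℕ, H k = 0 ∨ H k = 1 := by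
  obtain ⟨S, hS0, hSspan⟩ := hM
  set i₀ : Fin n := ⟨n - 1, by omega⟩
  -- membership criterion
  have hmem : ∀ α : Fin n →₀ ℕ,
      MvPolynomial.monomial α (1 : K) ∈ M ↔ ∃ β ∈ S, β ≤ α := by
    intro α
    rw [hSspan, MvPolynomial.mem_ideal_span_monomial_image]
    constructor
    · intro h
      exact h α (by simp [MvPolynomial.support_monomial])
    · intro h xi hxi
      simp [MvPolynomial.support_monomial] at hxi
      subst hxi; exact h
  -- sets are finite
  have hfin : ∀ k : ℕ, {α : Fin n →₀ ℕ |
      MvPolynomial.monomial α (1 : K) ∉ M ∧ ∑ i, α i * w i = k}.Finite := by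
    intro k
    have : {α : Fin n →₀ ℕ | MvPolynomial.monomial α (1 : K) ∉ M ∧ ∑ i, α i * w i = k}
        ⊆ {α : Fin n →₀ ℕ | ∀ i, α i ≤ k} := by
      intro α hα i
      have h1 : α i * w i ≤ ∑ j, α j * w j :=
        Finset.single_le_sum (f := fun j => α j * w j) (fun j _ => Nat.zero_le _)
          (Finset.mem_univ i)
      have h2 : α i ≤ α i * w i := Nat.le_mul_of_pos_right _ (hw i)
      have h3 := hα.2
      omega
    refine Set.Finite.subset ?_ this
    have hinj : Set.InjOn (fun α : Fin n →₀ ℕ => (α : Fin n → ℕ))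
        {α | ∀ i, α i ≤ k} := fun a _ b _ h => DFunLike.coe_injective h
    have himg : (fun α : Fin n →₀ ℕ => (α : Fin n → ℕ)) '' {α | ∀ i, α i ≤ k}
        ⊆ Set.pi Set.univ (fun _ => Set.Iic k) := by
      rintro _ ⟨α, hα, rfl⟩ i _; exact hα i
    exact Set.Finite.of_finite_image
      (Set.Finite.subset (Set.Finite.pi (fun _ => Set.finite_Iic k)) himg) hinj
  intro k
  -- shift map
  set m := k₀
  set k' := k + k₀ * w i₀ with hk'
  have hk₀le : k₀ ≤ k' := by
    have := Nat.le_mul_of_pos_right k₀ (hw i₀); omega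
  -- H k' ≤ 1
  have hHk' : H k' = 0 ∨ H k' = 1 := by
    have := hP k' hk₀le
    rcases hP01 (k' % d) (Nat.mod_lt _ (by omega)) with h | h <;> rw [h] at this <;>
      simp at this
    · left; exact_mod_cast this
    · right; exact_mod_cast this
  -- injection
  have hle : H k ≤ H k' := by
    rw [hH k, hH k']
    set f : (Fin n →₀ ℕ) → (Fin n →₀ ℕ) := fun α => α + Finsupp.single i₀ k₀ with hf
    have hmaps : f '' {α : Fin n →₀ ℕ |
        MvPolynomial.monomial α (1 : K) ∉ M ∧ ∑ i, α i * w i = k}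
        ⊆ {α : Fin n →₀ ℕ |
        MvPolynomial.monomial α (1 : K) ∉ M ∧ ∑ i, α i * w i = k'} := by
      rintro _ ⟨α, ⟨hαM, hαw⟩, rfl⟩
      constructor
      · rw [hmem] at hαM ⊢
        rintro ⟨β, hβS, hβle⟩
        refine hαM ⟨β, hβS, fun i => ?_⟩
        have := hβle i
        simp only [hf, Finsupp.add_apply, Finsupp.single_apply] at this
        by_cases hi : i₀ = i
        · subst hi; simp [hS0 β hβS]
        · simpa [hi] using this
      · have hsingle : ∑ x, (Finsupp.single i₀ k₀) x * w x = k₀ * w i₀ := by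
          simp [Finsupp.single_apply, Finset.sum_ite_eq]
        simp only [hf, Finsupp.add_apply, add_mul, Finset.sum_add_distrib, hαw, hsingle, hk']
    calc Set.ncard {α : Fin n →₀ ℕ |
        MvPolynomial.monomial α (1 : K) ∉ M ∧ ∑ i, α i * w i = k}
        = Set.ncard (f '' {α : Fin n →₀ ℕ |
        MvPolynomial.monomial α (1 : K) ∉ M ∧ ∑ i, α i * w i = k}) := by
          rw [Set.ncard_image_of_injective _ (add_left_injective _)]
      _ ≤ _ := Set.ncard_le_ncard hmaps (hfin k')
  omega
end

section
/- Let K be a field, R = K[x_1, …, x_n], fix positive integer weights w_1, …, w_n with d = lcm(w_1, …, w_n), and let M ⊆ R be a monomial ideal with weighted Hilbert function H(k) = #{α in the staircase of M : w(α) = k}. Suppose h(t) = ∑_{j=0}^s h_j t^j ∈ ℤ[t] satisfies (∑_{k≥0} H(k) t^k)·∏_{i=1}^n (1 − t^{w_i}) = h(t), and set r = max{0, s − (w_1 + ⋯ + w_n) + 1}. Let P_0, …, P_{d−1} ∈ ℚ[x] satisfy H_R(k) = P_{k mod d}(k) for all k ≥ 0, where H_R(k) = #{α ∈ ℕ^n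 : w(α) = k}, and let Q_0, …, Q_{d−1} ∈ ℚ[x] satisfy H(k) = Q_{k mod d}(k) for all k ≥ r. Then Q_{k mod d}(k) = ∑_{j=0}^s h_j · P_{(k−j) mod d}(k − j) for all integers k ≥ r (interpreting P_{m mod d}(m) via the polynomial evaluated at m also when m < 0). -/
/-!
Since `∏ (1 - t^{w_i})` is inverted by the generating series of `H_R` (the product of the
series `∑_{w_i ∣ j} t^j`), the Hilbert series equals `h(t) · ∑ H_R(k) t^k`, so
`H(k) = ∑_j h_j H_R(k - j)` as soon as `k ≥ s`. On a residue class `k ≡ c (mod d)` both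
`Q_c` and `∑_j h_j P_{(c-j) mod d}(X - j)` are polynomials that agree with `H` at infinitely many
points, hence they coincide.
-/

open Finset Polynomial

namespace PowerSeries

theorem one_sub_X_pow_mul_mk_dvd {R : Type*} [Ring R] {m : ℕ} (hm : 0 < m) :
    (1 - X ^ m : R⟦X⟧) * mk (fun k => if m ∣ k then 1 else 0) = 1 := by
  ext k
  rw [sub_mul, one_mul, map_sub, coeff_X_pow_mul', coeff_mk, coeff_one]
  rcases lt_or_ge k m with hkm | hmk
  · have : m ∣ k ↔ k = 0 := ⟨fun h => Nat.eq_zero_of_dvd_of_lt h hkm, fun h => h ▸ dvd_zero m⟩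
    simp [hkm, this]
  · have : m ∣ k - m ↔ m ∣ k := Nat.dvd_sub_iff_left hmk dvd_rfl
    simp [hmk, this, (hm.trans_le hmk).ne']

theorem coeff_prod_mk_dvd {ι R : Type*} [Fintype ι] [DecidableEq ι] [CommSemiring R]
    (w : ι → ℕ) (hw : ∀ i, 0 < w i) (k : ℕ) :
    coeff k (∏ i, mk fun j => if w i ∣ j then (1 : R) else 0) =
      {α : ι → ℕ | ∑ i, α i * w i = k}.ncard := by
  rw [coeff_prod]
  simp only [coeff_mk, prod_boole, mem_univ, true_implies]
  rw [sum_boole]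
  congr 1
  rw [← Set.ncard_coe_finset]
  refine (Set.InjOn.ncard_image (f := fun l : ι →₀ ℕ => fun i => l i / w i) ?_).symm.trans ?_
  · intro l hl l' hl' hll'
    simp only [coe_filter, mem_finsuppAntidiag, Set.mem_ofPred_eq] at hl hl'
    ext i
    rw [← Nat.div_mul_cancel (hl.2 i), ← Nat.div_mul_cancel (hl'.2 i)]
    exact congrArg (· * w i) (congrFun hll' i)
  · congr 1
    ext α
    simp only [coe_filter, mem_finsuppAntidiag, Set.mem_image, Set.mem_ofPred_eq]
    constructor
    · rintro ⟨l, ⟨⟨hsum, -⟩, hdvd⟩, rfl⟩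
      simpa only [Nat.div_mul_cancel (hdvd _)] using hsum
    · rintro hα
      refine ⟨Finsupp.equivFunOnFinite.symm fun i => α i * w i, ⟨⟨?_, subset_univ _⟩, ?_⟩, ?_⟩
      · simpa using hα
      · simp
      · ext i
        simp [Nat.mul_div_cancel _ (hw i)]

theorem prod_one_sub_X_pow_mul_mk_ncard {ι R : Type*} [Fintype ι] [DecidableEq ι] [CommRing R]
    (w : ι → ℕ) (hw : ∀ i, 0 < w i) :
    (∏ i, (1 - X ^ w i : R⟦X⟧)) * mk (fun k => ({α : ι → ℕ | ∑ i, α i * w i = k}.ncard : R)) =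
      1 := by
  have hmk : mk (fun k => ({α : ι → ℕ | ∑ i, α i * w i = k}.ncard : R)) =
      ∏ i, mk fun j => if w i ∣ j then (1 : R) else 0 := by
    ext k
    rw [coeff_mk, coeff_prod_mk_dvd w hw]
  rw [hmk, ← prod_mul_distrib]
  exact prod_eq_one fun i _ => one_sub_X_pow_mul_mk_dvd (hw i)

theorem coeff_coe_mul_of_natDegree_le {R : Type*} [CommSemiring R] {p : R[X]} {m : ℕ}
    (hm : p.natDegree ≤ m) (f : R⟦X⟧) :
    coeff m ((p : R⟦X⟧) * f) = ∑ j ∈ range (p.natDegree + 1), p.coeff j * coeff (m - j) f := by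
  rw [coeff_mul, Nat.sum_antidiagonal_eq_sum_range_succ (fun a b => coeff a (p : R⟦X⟧) * coeff b f)]
  simp only [Polynomial.coeff_coe]
  refine (sum_subset (range_subset_range.mpr (Nat.succ_le_succ hm)) fun j _ hj => ?_).symm
  rw [coeff_eq_zero_of_natDegree_lt (by simpa using hj), zero_mul]

end PowerSeries

theorem Polynomial.eq_of_eval_natCast_eq_of_modEq {R : Type*} [CommRing R] [IsDomain R]
    [CharZero R] {p q : R[X]} {d k N : ℕ} (hd : 0 < d)
    (h : ∀ m, N ≤ m → m ≡ k [MOD d] → p.eval (m : R) = q.eval (m : R)) : p = q := by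
  refine eq_of_infinite_eval_eq p q (Set.Infinite.mono ?_ ((Set.infinite_range_of_injective
    (f := fun t : ℕ => ((k + d * (N + t) : ℕ) : R)) fun a b hab => ?_)))
  · rintro _ ⟨t, rfl⟩
    exact h _ (by nlinarith) (Nat.add_mul_mod_self_left k d _)
  · have := Nat.eq_of_mul_eq_mul_left hd (Nat.add_left_cancel (Nat.cast_injective hab))
    omega

theorem Int.toNat_sub_emod_of_modEq {d k m j : ℕ} (hmk : m ≡ k [MOD d]) (hj : j ≤ m) :
    (((k : ℤ) - j) % d).toNat = (m - j) % d := by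
  have : (k : ℤ) - j ≡ ((m - j : ℕ) : ℤ) [ZMOD d] := by
    rw [Nat.cast_sub hj]
    exact ((Int.natCast_modEq_iff.mpr hmk).symm).sub_right _
  rw [this, ← Int.natCast_mod, Int.toNat_natCast]

theorem stmt_6_general (n : ℕ) (w : Fin n → ℕ) (hw : ∀ i, 0 < w i)
    (d : ℕ) (hd : d = Finset.lcm Finset.univ w)
    (H : ℕ → ℕ)
    (HR : ℕ → ℕ)
    (hHR : ∀ k, HR k = Set.ncard {α : Fin n → ℕ | ∑ i, α i * w i = k})
    (h : Polynomial ℤ) (s : ℕ) (hs : s = h.natDegree)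
    (hser : PowerSeries.mk (fun k => (H k : ℤ)) *
      ((∏ i, (1 - Polynomial.X ^ w i : Polynomial ℤ)) : PowerSeries ℤ) = (h : PowerSeries ℤ))
    (r : ℕ)
    (P : ℕ → Polynomial ℚ)
    (hP : ∀ k : ℕ, (HR k : ℚ) = (P (k % d)).eval (k : ℚ))
    (Q : ℕ → Polynomial ℚ)
    (hQ : ∀ k : ℕ, r ≤ k → (H k : ℚ) = (Q (k % d)).eval (k : ℚ)) :
    ∀ k : ℕ, r ≤ k →
      (Q (k % d)).eval (k : ℚ) =
        ∑ j ∈ Finset.range (s + 1),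
          (h.coeff j : ℚ) * (P ((((k : ℤ) - j) % (d : ℤ)).toNat)).eval ((k : ℚ) - j) := by
  intro k _
  have hd0 : 0 < d := by
    rw [hd, Nat.pos_iff_ne_zero, Ne, Finset.lcm_eq_zero_iff]
    simpa using fun i => (hw i).ne'
  have hH_series : PowerSeries.mk (fun k => (H k : ℤ)) =
      h * PowerSeries.mk (fun k => (HR k : ℤ)) := by
    rw [← hser, mul_assoc]
    push_cast
    simp only [hHR, PowerSeries.prod_one_sub_X_pow_mul_mk_ncard w hw, mul_one]
  have hH_conv : ∀ m, s ≤ m → (H m : ℚ) = ∑ j ∈ range (s + 1), (h.coeff j : ℚ) * HR (m - j) := by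
    intro m hm
    have := congrArg (PowerSeries.coeff m) hH_series
    rw [PowerSeries.coeff_mk, PowerSeries.coeff_coe_mul_of_natDegree_le (hs ▸ hm), ← hs] at this
    simp only [PowerSeries.coeff_mk] at this
    exact_mod_cast this
  set F : ℚ[X] := ∑ j ∈ range (s + 1),
    C (h.coeff j : ℚ) * (P ((((k : ℤ) - j) % d).toNat)).comp (X - C (j : ℚ))
  have eval_F : ∀ x, F.eval x = ∑ j ∈ range (s + 1),
      (h.coeff j : ℚ) * (P ((((k : ℤ) - j) % d).toNat)).eval (x - j) := by
    simp [F, eval_finsetSum]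
  suffices Q (k % d) = F by rw [this, eval_F]
  refine eq_of_eval_natCast_eq_of_modEq hd0 (N := max r s) (k := k) fun m hm hmk => ?_
  rw [← hmk, ← hQ m (le_of_max_le_left hm), hH_conv m (le_of_max_le_right hm), eval_F]
  refine sum_congr rfl fun j hj => ?_
  have hjm : j ≤ m := (Nat.lt_succ_iff.mp (mem_range.mp hj)).trans (le_of_max_le_right hm)
  rw [Int.toNat_sub_emod_of_modEq hmk hjm, ← Nat.cast_sub hjm, ← hP]

/-- Let `M` be a monomial ideal with weighted Hilbert function `H`, and
`h(t) = ∑_{j=0}^s h_j t^j ∈ ℤ[t]` with `(∑ H(k) t^k)·∏(1 - t^{w_i}) = h(t)`; put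
`r = max{0, s - ∑ w_i + 1}`.  If `P_0, …, P_{d-1}` is a quasi-polynomial for the weighted
counting function `H_R` (valid for all `k ≥ 0`) and `Q_0, …, Q_{d-1}` one for `H`
(valid for `k ≥ r`), then `Q_{k mod d}(k) = ∑_{j=0}^s h_j · P_{(k-j) mod d}(k - j)` for all
`k ≥ r` (evaluating `P` at `k - j` also when `k - j < 0`). -/
theorem stmt_6 (n : ℕ) (hn : 1 ≤ n) (w : Fin n → ℕ) (hw : ∀ i, 0 < w i)
    (d : ℕ) (hd : d = Finset.lcm Finset.univ w)
    (K : Type*) [Field K]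
    (M : Ideal (MvPolynomial (Fin n) K))
    (hM : ∃ S : Set (Fin n →₀ ℕ),
      M = Ideal.span ((fun α => MvPolynomial.monomial α (1 : K)) '' S))
    (H : ℕ → ℕ)
    (hH : ∀ k, H k = Set.ncard {α : Fin n →₀ ℕ |
      MvPolynomial.monomial α (1 : K) ∉ M ∧ ∑ i, α i * w i = k})
    (HR : ℕ → ℕ)
    (hHR : ∀ k, HR k = Set.ncard {α : Fin n → ℕ | ∑ i, α i * w i = k})
    (h : Polynomial ℤ) (s : ℕ) (hs : s = h.natDegree)
    (hser : PowerSeries.mk (fun k => (H k : ℤ)) *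
      ((∏ i, (1 - Polynomial.X ^ w i : Polynomial ℤ)) : PowerSeries ℤ) = (h : PowerSeries ℤ))
    (r : ℕ) (hr : r = ((s : ℤ) - (∑ i, w i : ℕ) + 1).toNat)
    (P : ℕ → Polynomial ℚ)
    (hP : ∀ k : ℕ, (HR k : ℚ) = (P (k % d)).eval (k : ℚ))
    (Q : ℕ → Polynomial ℚ)
    (hQ : ∀ k : ℕ, r ≤ k → (H k : ℚ) = (Q (k % d)).eval (k : ℚ)) :
    ∀ k : ℕ, r ≤ k →
      (Q (k % d)).eval (k : ℚ) =
        ∑ j ∈ Finset.range (s + 1),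
          (h.coeff j : ℚ) * (P ((((k : ℤ) - j) % (d : ℤ)).toNat)).eval ((k : ℚ) - j) :=
  stmt_6_general n w hw d hd H HR hHR h s hs hser r P hP Q hQ
end

section
/- Let λ_1, …, λ_l be distinct nonzero complex numbers, α_1, …, α_l non-negative integers, and 0 ≤ k ≤ l. Set g(x) = ∏_{i=1}^k (1 − λ_i x)^{α_i} and f(x) = ∏_{i=k+1}^l (1 − λ_i x)^{α_i}, and assume deg f < deg g. Let b : ℕ → ℂ be defined by the power series expansion f(x)/g(x) = ∑_{n≥0} b(n) x^n. Then for every n ≥ 1, n·b(n) = ∑_{r=1}^n ( ∑_{i=1}^k α_i λ_i^r − ∑_{i=k+1}^l α_i λ_i^r ) · b(n − r). -/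
/-!
Write `D = X · d/dX`. Since `D (1 - cX) = -(∑_{r ≥ 1} c^r X^r) (1 - cX)` and `D` is a derivation,
`D g = -S_g g` and `D f = -S_f f` with `S = ∑ α_i ∑_{r ≥ 1} λ_i^r X^r` over the respective factors.
Applying `D` to `g · B = f` and cancelling `g` (whose constant coefficient is `1`) gives
`D B = (S_g - S_f) B`, whose coefficient of `X^m` is the claimed recursion.
-/

namespace PowerSeries

variable {R : Type*} [CommRing R]

def geomTail (c : R) : R⟦X⟧ := mk fun r => if r = 0 then 0 else c ^ r

theorem geomTail_eq (c : R) : geomTail c = X * (C c * mk (c ^ ·)) := by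
  ext (_ | n) <;> simp [geomTail, pow_succ', coeff_succ_X_mul]

theorem mk_pow_mul_one_sub_C_mul_X (c : R) : mk (c ^ ·) * (1 - C c * X) = 1 := by
  have h := congrArg (rescale c) (mk_one_mul_one_sub_eq_one R)
  rw [map_mul, map_one] at h
  convert h using 2
  · ext; simp
  · simp

theorem X_mul_derivative_one_sub_C_mul_X (c : R) :
    X * d⁄dX R (1 - C c * X) = -geomTail c * (1 - C c * X) := by
  have hd : d⁄dX R (1 - C c * X) = -C c := by
    rw [← smul_eq_C_mul, map_sub, Derivation.map_one_eq_zero, Derivation.map_smul, derivative_X,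
      smul_eq_C_mul, mul_one, zero_sub]
  rw [hd, geomTail_eq]
  linear_combination (X * C c) * mk_pow_mul_one_sub_C_mul_X c

theorem X_mul_derivative_mul {p q a b : R⟦X⟧} (hp : X * d⁄dX R p = a * p)
    (hq : X * d⁄dX R q = b * q) : X * d⁄dX R (p * q) = (a + b) * (p * q) := by
  rw [Derivation.leibniz, smul_eq_mul, smul_eq_mul]
  linear_combination p * hq + q * hp

theorem X_mul_derivative_pow {p a : R⟦X⟧} (hp : X * d⁄dX R p = a * p) (n : ℕ) :
    X * d⁄dX R (p ^ n) = (n • a) * p ^ n := by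
  induction n with
  | zero => simp
  | succ n ih => rw [pow_succ, X_mul_derivative_mul ih hp, succ_nsmul]

theorem X_mul_derivative_prod {ι : Type*} (s : Finset ι) {p a : ι → R⟦X⟧}
    (hp : ∀ i ∈ s, X * d⁄dX R (p i) = a i * p i) :
    X * d⁄dX R (∏ i ∈ s, p i) = (∑ i ∈ s, a i) * ∏ i ∈ s, p i := by
  induction s using Finset.cons_induction with
  | empty => simp
  | cons j s hj ih =>
    rw [Finset.prod_cons, Finset.sum_cons]
    exact X_mul_derivative_mul (hp j (s.mem_cons_self j))
      (ih fun i hi => hp i (Finset.mem_cons_of_mem hi))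

theorem X_mul_derivative_prod_one_sub_C_mul_X_pow {ι : Type*} (s : Finset ι) (c : ι → R)
    (n : ι → ℕ) :
    X * d⁄dX R (∏ i ∈ s, (1 - C (c i) * X) ^ n i) =
      -(∑ i ∈ s, n i • geomTail (c i)) * ∏ i ∈ s, (1 - C (c i) * X) ^ n i := by
  rw [X_mul_derivative_prod s fun i _ =>
    X_mul_derivative_pow (X_mul_derivative_one_sub_C_mul_X _) _]
  simp

theorem X_mul_derivative_of_mul_eq [IsDomain R] {f g q a b : R⟦X⟧} (hg : X * d⁄dX R g = a * g)
    (hf : X * d⁄dX R f = b * f) (hq : g * q = f) (hg0 : g ≠ 0) :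
    X * d⁄dX R q = (b - a) * q := by
  refine mul_left_cancel₀ hg0 ?_
  have h := congrArg (X * d⁄dX R ·) hq
  simp only [Derivation.leibniz, smul_eq_mul] at h
  linear_combination h - q * hg + hf - b * hq

theorem coeff_X_mul_derivative (f : R⟦X⟧) (n : ℕ) : coeff n (X * d⁄dX R f) = n * coeff n f := by
  cases n <;> simp [coeff_succ_X_mul, coeff_derivative, mul_comm]

theorem coeff_mul_eq_sum_Icc {p q : R⟦X⟧} (hp : constantCoeff p = 0) (n : ℕ) :
    coeff n (p * q) = ∑ r ∈ Finset.Icc 1 n, coeff r p * coeff (n - r) q := by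
  rw [coeff_mul, Finset.Nat.sum_antidiagonal_eq_sum_range_succ (fun i j => coeff i p * coeff j q),
    Finset.range_eq_Ico, Finset.sum_eq_sum_Ico_succ_bot (Nat.succ_pos n)]
  simp [hp]
  rfl

theorem coeff_sum_nsmul_geomTail {ι : Type*} (s : Finset ι) (c : ι → R) (n : ι → ℕ) {r : ℕ}
    (hr : r ≠ 0) : coeff r (∑ i ∈ s, n i • geomTail (c i)) = ∑ i ∈ s, (n i : R) * c i ^ r := by
  rw [map_sum]
  refine Finset.sum_congr rfl fun i _ => ?_
  rw [map_nsmul, geomTail, coeff_mk, if_neg hr, nsmul_eq_mul]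

end PowerSeries

theorem Polynomial.coe_prod_one_sub_C_mul_X_pow {R ι : Type*} [CommRing R] (s : Finset ι)
    (c : ι → R) (n : ι → ℕ) :
    ((∏ i ∈ s, (1 - C (c i) * X) ^ n i : Polynomial R) : PowerSeries R) =
      ∏ i ∈ s, (1 - PowerSeries.C (c i) * PowerSeries.X) ^ n i := by
  rw [← Polynomial.coeToPowerSeries.ringHom_apply, map_prod]
  simp [Polynomial.coeToPowerSeries.ringHom_apply]


theorem stmt_7_general (l : ℕ) (lam : Fin l → ℂ)
    (α : Fin l → ℕ) (k : ℕ)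
    (g f : Polynomial ℂ)
    (hg : g = ∏ i ∈ Finset.univ.filter (fun i : Fin l => (i : ℕ) < k),
      (1 - Polynomial.C (lam i) * Polynomial.X) ^ α i)
    (hf : f = ∏ i ∈ Finset.univ.filter (fun i : Fin l => ¬ (i : ℕ) < k),
      (1 - Polynomial.C (lam i) * Polynomial.X) ^ α i)
    (b : ℕ → ℂ)
    (hb : (g : PowerSeries ℂ) * PowerSeries.mk b = (f : PowerSeries ℂ)) :
    ∀ m : ℕ, 1 ≤ m →
      (m : ℂ) * b m =
        ∑ r ∈ Finset.Icc 1 m,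
          ((∑ i ∈ Finset.univ.filter (fun i : Fin l => (i : ℕ) < k), (α i : ℂ) * lam i ^ r) -
            ∑ i ∈ Finset.univ.filter (fun i : Fin l => ¬ (i : ℕ) < k), (α i : ℂ) * lam i ^ r) *
          b (m - r) := by
  intro m _
  subst hg hf
  rw [Polynomial.coe_prod_one_sub_C_mul_X_pow, Polynomial.coe_prod_one_sub_C_mul_X_pow] at hb
  have hg0 : ∏ i ∈ Finset.univ.filter (fun i : Fin l => (i : ℕ) < k),
      (1 - PowerSeries.C (lam i) * PowerSeries.X) ^ α i ≠ 0 := fun h => by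
    simpa using congrArg PowerSeries.constantCoeff h
  have key := PowerSeries.X_mul_derivative_of_mul_eq
    (PowerSeries.X_mul_derivative_prod_one_sub_C_mul_X_pow _ lam α)
    (PowerSeries.X_mul_derivative_prod_one_sub_C_mul_X_pow _ lam α) hb hg0
  have hm := congrArg (PowerSeries.coeff m) key
  rw [PowerSeries.coeff_X_mul_derivative,
    PowerSeries.coeff_mul_eq_sum_Icc (by simp [PowerSeries.geomTail])] at hm
  simp only [PowerSeries.coeff_mk] at hm
  rw [hm]
  refine Finset.sum_congr rfl fun r hr => ?_
  have hr0 : r ≠ 0 := by grind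
  rw [map_sub, map_neg, map_neg, PowerSeries.coeff_sum_nsmul_geomTail _ _ _ hr0,
    PowerSeries.coeff_sum_nsmul_geomTail _ _ _ hr0, neg_sub_neg]

/-- **Lemma on power-series coefficients.** Let `λ_1, …, λ_l` be distinct
nonzero complex numbers, `α_i ∈ ℕ`, `0 ≤ k ≤ l`, `g = ∏_{i≤k} (1-λ_i x)^{α_i}`,
`f = ∏_{i>k} (1-λ_i x)^{α_i}`, with `deg f < deg g`.  If `f/g = ∑ b(n) x^n`, then for all
`n ≥ 1`, `n·b(n) = ∑_{r=1}^n (∑_{i≤k} α_i λ_i^r − ∑_{i>k} α_i λ_i^r) b(n-r)`. -/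
theorem stmt_7 (l : ℕ) (lam : Fin l → ℂ) (hdist : Function.Injective lam)
    (hne : ∀ i, lam i ≠ 0) (α : Fin l → ℕ) (k : ℕ) (hk : k ≤ l)
    (g f : Polynomial ℂ)
    (hg : g = ∏ i ∈ Finset.univ.filter (fun i : Fin l => (i : ℕ) < k),
      (1 - Polynomial.C (lam i) * Polynomial.X) ^ α i)
    (hf : f = ∏ i ∈ Finset.univ.filter (fun i : Fin l => ¬ (i : ℕ) < k),
      (1 - Polynomial.C (lam i) * Polynomial.X) ^ α i)
    (hdeg : f.natDegree < g.natDegree)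
    (b : ℕ → ℂ)
    (hb : (g : PowerSeries ℂ) * PowerSeries.mk b = (f : PowerSeries ℂ)) :
    ∀ m : ℕ, 1 ≤ m →
      (m : ℂ) * b m =
        ∑ r ∈ Finset.Icc 1 m,
          ((∑ i ∈ Finset.univ.filter (fun i : Fin l => (i : ℕ) < k), (α i : ℂ) * lam i ^ r) -
            ∑ i ∈ Finset.univ.filter (fun i : Fin l => ¬ (i : ℕ) < k), (α i : ℂ) * lam i ^ r) *
          b (m - r) :=
  stmt_7_general l lam α k g f hg hf b hb
end

section
/- Let F_q be a finite field with q elements, R = F_q[x_1, …, x_n], I ⊆ R an ideal, and I_q = I + (x_1^q − x_1, …, x_n^q − x_n). Let V = {P ∈ F_q^n : f(P) = 0 for all f ∈ I_q}. Then V equals the set of F_q-rational zeros of I, i.e. V = {P ∈ F_q^n : f(P) = 0 for all f ∈ I}, and the evaluation map ev : R/I_q → (V → F_q), sending the class of f to the function P ↦ f(P), is a well-defined F_q-linear bijection; in particular dim_{F_q}(R/I_q) = |V|. -/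
/-!
Every point of `F^n` is a zero of each `X i ^ q - X i`, so adjoining these field equations does not
change the zero locus. Modulo the field equations every polynomial reduces to one of degree `< q`
in each variable, and such a polynomial vanishing on all of `F^n` is zero: the field equations
generate the ideal of polynomials vanishing everywhere. If an ideal `K` contains them, a polynomial
vanishing on the zero locus of `K` differs from an element of `K` by one vanishing everywhere
(interpolate it at the points off the zero locus by elements of `K` that do not vanish there),
so `K` is the vanishing ideal of its zero locus and evaluation `R ⧸ K → (V → F)` is injective.
It is surjective because every function `F^n → F` is a polynomial function.
-/

open MvPolynomial

theorem pow_succ_eq_pow_mod_succ_of_pow_eq_self {M : Type*} [Monoid M] {x : M} {q : ℕ}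
    (hx : x ^ q = x) (e : ℕ) : x ^ (e + 1) = x ^ (e % (q - 1) + 1) := by
  have hmul (k : ℕ) : x ^ ((q - 1) * k + 1) = x := by
    obtain rfl | hq := Nat.eq_zero_or_pos q
    · simp
    induction k with
    | zero => simp
    | succ k ih =>
      rw [mul_add, mul_one, add_right_comm, pow_add, ih, ← pow_succ', Nat.sub_add_cancel hq, hx]
  conv_lhs => rw [← Nat.mod_add_div e (q - 1), add_assoc, pow_add, hmul, ← pow_succ]

namespace MvPolynomial

universe u v

variable {σ : Type u} {F : Type v} [Field F]

noncomputable def evalZeroLocus (K : Ideal (MvPolynomial σ F)) :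
    (MvPolynomial σ F ⧸ K) →ₐ[F] (zeroLocus F K → F) :=
  Ideal.Quotient.liftₐ K (AlgHom.pi fun x : zeroLocus F K => aeval (x : σ → F))
    fun f hf => by ext x; exact x.2 f hf

@[simp]
theorem evalZeroLocus_mk (K : Ideal (MvPolynomial σ F)) (f : MvPolynomial σ F)
    (x : zeroLocus F K) : evalZeroLocus K (Ideal.Quotient.mk K f) x = eval x.1 f :=
  rfl

variable [Fintype F]

variable (σ F) in
noncomputable def fieldEquations : Ideal (MvPolynomial σ F) :=
  Ideal.span (Set.range fun i => X i ^ Fintype.card F - X i)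

theorem eval_eq_zero_of_mem_fieldEquations {f : MvPolynomial σ F}
    (hf : f ∈ fieldEquations σ F) (x : σ → F) : eval x f = 0 := by
  suffices fieldEquations σ F ≤ RingHom.ker (eval x) from this hf
  rw [fieldEquations, Ideal.span_le]
  rintro _ ⟨i, rfl⟩
  simp [FiniteField.pow_card]

theorem exists_mem_restrictDegree_sub_mem_fieldEquations (f : MvPolynomial σ F) :
    ∃ g ∈ restrictDegree σ F (Fintype.card F - 1), f - g ∈ fieldEquations σ F := by
  set q := Fintype.card F
  let π := Ideal.Quotient.mk (fieldEquations σ F)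
  have hX (i : σ) : π (X i) ^ q = π (X i) := by
    rw [← map_pow, Ideal.Quotient.mk_eq_mk_iff_sub_mem]
    exact Ideal.subset_span ⟨i, rfl⟩
  -- exponents are reduced mod `q - 1` into `1, …, q - 1`, as `X i ^ q ≡ X i`
  let r : ℕ → ℕ := fun e => if e = 0 then 0 else (e - 1) % (q - 1) + 1
  have hr (e : ℕ) : r e ≤ q - 1 := by
    have : 1 < q := Fintype.one_lt_card
    unfold r; split_ifs
    · omega
    · have := Nat.mod_lt (e - 1) (by omega : 0 < q - 1); omega
  have hpow (i : σ) (e : ℕ) : π (X i) ^ e = π (X i) ^ r e := by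
    cases e with
    | zero => rfl
    | succ e => exact pow_succ_eq_pow_mod_succ_of_pow_eq_self (hX i) e
  induction f using induction_on' with
  | monomial d c =>
    refine ⟨monomial (d.mapRange r (if_pos rfl)) c, ?_, ?_⟩
    · rw [mem_restrictDegree]
      intro s hs i
      rw [Finset.mem_singleton.mp (support_monomial_subset hs)]
      exact hr _
    · rw [← Ideal.Quotient.mk_eq_mk_iff_sub_mem, monomial_eq, monomial_eq,
        Finsupp.prod_mapRange_index (fun _ => pow_zero _)]
      simp only [map_mul, map_finsuppProd, map_pow]
      exact congrArg _ (Finsupp.prod_congr fun i _ => hpow i (d i))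
  | add f g hf hg =>
    obtain ⟨f', hf', hff'⟩ := hf
    obtain ⟨g', hg', hgg'⟩ := hg
    exact ⟨f' + g', add_mem hf' hg', add_sub_add_comm f g f' g' ▸ add_mem hff' hgg'⟩

theorem eq_zero_of_forall_eval_eq_zero [Finite σ] {f : MvPolynomial σ F}
    (h : ∀ x : σ → F, eval x f = 0) (hf : f ∈ restrictDegree σ F (Fintype.card F - 1)) :
    f = 0 := by
  classical
  -- `MvPolynomial.eq_zero_of_eval_eq_zero` wants the variables in the universe of `F`
  let ι : σ ≃ ULift.{v} (Fin (Nat.card σ)) := (Finite.equivFin σ).trans Equiv.ulift.symm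
  have hι : Function.Injective ι := ι.injective
  have hup : rename ι f = 0 := by
    refine eq_zero_of_eval_eq_zero _ F _ (fun x => by rw [eval_rename]; exact h _) ?_
    rw [mem_restrictDegree_iff_sup] at hf ⊢
    intro j
    obtain ⟨i, rfl⟩ := ι.surjective j
    rw [degrees_rename_of_injective hι, Multiset.count_map_eq_count' _ _ hι]
    exact hf i
  exact rename_injective _ hι (hup.trans (map_zero _).symm)

theorem mem_fieldEquations_iff [Finite σ] {f : MvPolynomial σ F} :
    f ∈ fieldEquations σ F ↔ ∀ x : σ → F, eval x f = 0 := by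
  refine ⟨eval_eq_zero_of_mem_fieldEquations, fun hf => ?_⟩
  obtain ⟨g, hg, hfg⟩ := exists_mem_restrictDegree_sub_mem_fieldEquations f
  have hg0 : g = 0 := eq_zero_of_forall_eval_eq_zero (fun x => by
    simpa [hf x] using eval_eq_zero_of_mem_fieldEquations hfg x) hg
  simpa [hg0] using hfg

theorem zeroLocus_sup_fieldEquations (I : Ideal (MvPolynomial σ F)) :
    zeroLocus F (I ⊔ fieldEquations σ F) = zeroLocus F I := by
  refine (zeroLocus_anti_mono le_sup_left).antisymm fun x hx f hf => ?_
  obtain ⟨g, hg, h, hh, rfl⟩ := Submodule.mem_sup.mp hf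
  rw [mem_zeroLocus_iff] at hx
  rw [map_add, hx g hg, zero_add]
  exact eval_eq_zero_of_mem_fieldEquations hh x

theorem exists_mem_eval_eq_one_of_notMem_zeroLocus [Fintype σ] {K : Ideal (MvPolynomial σ F)}
    {p : σ → F} (hp : p ∉ zeroLocus F K) :
    ∃ e ∈ K, eval p e = 1 ∧ ∀ x ≠ p, eval x e = 0 := by
  obtain ⟨g, hg, hgp⟩ : ∃ g ∈ K, eval p g ≠ 0 := by simpa using hp
  refine ⟨C (eval p g)⁻¹ * indicator p * g, K.mul_mem_left _ hg, ?_, fun x hx => ?_⟩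
  · simp [eval_indicator_apply_eq_one, inv_mul_cancel₀ hgp]
  · simp [eval_indicator_apply_eq_zero x p hx]

theorem vanishingIdeal_zeroLocus_eq_of_fieldEquations_le [Fintype σ]
    {K : Ideal (MvPolynomial σ F)} (hK : fieldEquations σ F ≤ K) :
    vanishingIdeal F (zeroLocus F K) = K := by
  classical
  refine le_antisymm (fun f hf => ?_) (le_vanishingIdeal_zeroLocus K)
  replace hf : ∀ p ∈ zeroLocus F K, eval p f = 0 := by simpa using hf
  choose! e heK he₁ he₀ using fun p (hp : p ∉ zeroLocus F K) =>
    exists_mem_eval_eq_one_of_notMem_zeroLocus hp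
  -- `s` interpolates `f` off the zero locus by elements of `K`, so `f - s` vanishes everywhere
  set s := ∑ p, C (eval p f) * e p
  have hs : s ∈ K := by
    refine sum_mem fun p _ => ?_
    by_cases hp : p ∈ zeroLocus F K
    · simp [hf p hp]
    · exact K.mul_mem_left _ (heK p hp)
  have hfs : f - s ∈ fieldEquations σ F := by
    refine mem_fieldEquations_iff.mpr fun x => ?_
    rw [map_sub, sub_eq_zero, map_sum, Finset.sum_eq_single x]
    · by_cases hx : x ∈ zeroLocus F K
      · simp [hf x hx]
      · simp [he₁ x hx]
    · intro p _ hpx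
      by_cases hp : p ∈ zeroLocus F K
      · simp [hf p hp]
      · simp [he₀ p hp x hpx.symm]
    · simp
  simpa using K.add_mem (hK hfs) hs

theorem evalZeroLocus_surjective [Finite σ] (K : Ideal (MvPolynomial σ F)) :
    Function.Surjective (evalZeroLocus K) := by
  intro φ
  obtain ⟨f, -, hf⟩ :=
    (map_restrict_dom_evalₗ F σ).ge (Submodule.mem_top (x := Function.extend Subtype.val φ 0))
  refine ⟨Ideal.Quotient.mk K f, ?_⟩
  ext x
  rw [evalZeroLocus_mk, ← evalₗ_apply, hf, Subtype.val_injective.extend_apply]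

theorem evalZeroLocus_injective [Fintype σ] {K : Ideal (MvPolynomial σ F)}
    (hK : fieldEquations σ F ≤ K) : Function.Injective (evalZeroLocus K) := by
  refine (injective_iff_map_eq_zero _).mpr fun a ha => ?_
  obtain ⟨f, rfl⟩ := Ideal.Quotient.mk_surjective a
  rw [Ideal.Quotient.eq_zero_iff_mem, ← vanishingIdeal_zeroLocus_eq_of_fieldEquations_le hK]
  intro x hx
  simpa using congrFun ha ⟨x, hx⟩

end MvPolynomial

/-- Let `F_q` be a finite field, `I ⊆ F_q[x_1,…,x_n]` an ideal, and
`I_q = I + (x_1^q − x_1, …, x_n^q − x_n)`.  Then the variety `V` of `I_q` in `F_q^n` equals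
the set of `F_q`-rational zeros of `I`, and evaluation gives a well-defined `F_q`-linear
bijection `ev : R/I_q → (V → F_q)`; in particular `dim (R/I_q) = |V|`. -/
theorem stmt_13 (F : Type*) [Field F] [Fintype F] (q : ℕ) (hq : q = Fintype.card F)
    (n : ℕ) (I : Ideal (MvPolynomial (Fin n) F))
    (Iq : Ideal (MvPolynomial (Fin n) F))
    (hIq : Iq = I + Ideal.span
      ((fun i : Fin n => (MvPolynomial.X i : MvPolynomial (Fin n) F) ^ q - MvPolynomial.X i) ''
        Set.univ))
    (V : Set (Fin n → F))
    (hV : V = {p : Fin n → F | ∀ f ∈ Iq, MvPolynomial.eval p f = 0}) :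
    V = {p : Fin n → F | ∀ f ∈ I, MvPolynomial.eval p f = 0} ∧
    (∃ ev : (MvPolynomial (Fin n) F ⧸ Iq) →ₗ[F] (V → F),
      (∀ f : MvPolynomial (Fin n) F, ∀ p : V,
        ev (Ideal.Quotient.mk Iq f) p = MvPolynomial.eval (p : Fin n → F) f) ∧
      Function.Bijective ev) ∧
    Module.finrank F (MvPolynomial (Fin n) F ⧸ Iq) = Nat.card V := by
  replace hIq : Iq = I ⊔ fieldEquations (Fin n) F := by
    rw [hIq, Ideal.add_eq_sup, Set.image_univ, hq, fieldEquations]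
  obtain rfl : V = zeroLocus F Iq := by
    rw [hV]; ext; simp
  have hbij : Function.Bijective (evalZeroLocus Iq) :=
    ⟨evalZeroLocus_injective (hIq ▸ le_sup_right), evalZeroLocus_surjective Iq⟩
  refine ⟨?_, ⟨(evalZeroLocus Iq).toLinearMap, evalZeroLocus_mk Iq, hbij⟩, ?_⟩
  · rw [hIq, zeroLocus_sup_fieldEquations]
    ext; simp
  · have := Fintype.ofFinite (zeroLocus F Iq)
    rw [(LinearEquiv.ofBijective (evalZeroLocus Iq).toLinearMap hbij).finrank_eq,
      Module.finrank_pi, Nat.card_eq_fintype_card]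
end

section
/- Every linear code may be represented as an affine-variety code: for every prime power q, every N ≥ 1, and every F_q-linear subspace C ⊆ F_q^N, there exist n ≥ 1, an ideal I ⊆ F_q[x_1, …, x_n], an enumeration P_1, …, P_N (without repetition) of the set of common zeros in F_q^n of I_q := I + (x_1^q − x_1, …, x_n^q − x_n) (so this zero set has exactly N points), and an F_q-linear subspace L ⊆ F_q[x_1, …, x_n]/I_q, such that C = { (f(P_1), …, f(P_N)) : f̄ ∈ L }. -/
open MvPolynomial

/-- indicator polynomial of a point -/
noncomputable def indPoly {F : Type*} [Field F] {n : ℕ} (q : ℕ) (a : Fin n → F) :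
    MvPolynomial (Fin n) F :=
  ∏ i : Fin n, (1 - (X i - MvPolynomial.C (a i)) ^ (q - 1))

open Classical in
lemma eval_indPoly {F : Type*} [Field F] [Fintype F] {n : ℕ} (q : ℕ)
    (hq : q = Fintype.card F) (p a : Fin n → F) :
    MvPolynomial.eval p (indPoly q a) = if p = a then 1 else 0 := by
  have h2 : 2 ≤ q := hq ▸ Fintype.one_lt_card
  unfold indPoly
  rw [map_prod]
  by_cases h : p = a
  · subst h
    rw [if_pos rfl]
    apply Finset.prod_eq_one
    intro i _
    simp [zero_pow (by omega : q - 1 ≠ 0)]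
  · rw [if_neg h]
    obtain ⟨i, hi⟩ := Function.ne_iff.mp h
    apply Finset.prod_eq_zero (Finset.mem_univ i)
    have hone : (p i - a i) ^ (q - 1) = 1 := by
      rw [hq]; exact FiniteField.pow_card_sub_one_eq_one _ (sub_ne_zero_of_ne hi)
    simp [hone]

/-- Every linear code is an affine-variety code: for any finite field
`F_q`, `N ≥ 1` and `F_q`-linear subspace `C ⊆ F_q^N`, there are `n ≥ 1`, an ideal
`I ⊆ F_q[x_1,…,x_n]`, an enumeration `P_1, …, P_N` (without repetition) of the common zeros
of `I_q = I + (x_1^q − x_1, …, x_n^q − x_n)` in `F_q^n`, and a subspace `L` of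
`F_q[x_1,…,x_n]/I_q` such that `C = {(f(P_1), …, f(P_N)) : f̄ ∈ L}`. -/
theorem stmt_14 (F : Type*) [Field F] [Fintype F] (q : ℕ) (hq : q = Fintype.card F)
    (N : ℕ) (hN : 1 ≤ N) (C : Submodule F (Fin N → F)) :
    ∃ (n : ℕ), 1 ≤ n ∧
    ∃ (I : Ideal (MvPolynomial (Fin n) F))
      (Iq : Ideal (MvPolynomial (Fin n) F)),
      Iq = I + Ideal.span
        ((fun i : Fin n => (MvPolynomial.X i : MvPolynomial (Fin n) F) ^ q - MvPolynomial.X i) ''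
          Set.univ) ∧
    ∃ (P : Fin N → (Fin n → F)),
      Function.Injective P ∧
      (∀ p : Fin n → F, (∀ f ∈ Iq, MvPolynomial.eval p f = 0) ↔ ∃ j, P j = p) ∧
    ∃ (L : Submodule F (MvPolynomial (Fin n) F ⧸ Iq)),
      (C : Set (Fin N → F)) =
        {v | ∃ f : MvPolynomial (Fin n) F, Ideal.Quotient.mk Iq f ∈ L ∧
          v = fun j => MvPolynomial.eval (P j) f} := by
  classical
  refine ⟨N, hN, ?_⟩
  set P : Fin N → (Fin N → F) := fun j => Pi.single j 1 with hP
  have hPinj : Function.Injective P := by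
    intro i j hij
    by_contra hne
    have := congrFun hij i
    simp [hP, Pi.single_apply, hne] at this
  set I : Ideal (MvPolynomial (Fin N) F) :=
    Ideal.span (indPoly q '' {a | a ∉ Set.range P}) with hI
  set Iq : Ideal (MvPolynomial (Fin N) F) := I + Ideal.span
      ((fun i : Fin N => (MvPolynomial.X i : MvPolynomial (Fin N) F) ^ q - MvPolynomial.X i) ''
        Set.univ) with hIq
  -- every point in range P kills Iq
  have hzero : ∀ j : Fin N, ∀ f ∈ Iq, MvPolynomial.eval (P j) f = 0 := by
    intro j f hf
    have hle : Iq ≤ RingHom.ker (MvPolynomial.eval (P j)) := by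
      rw [hIq]
      apply sup_le
      · rw [hI, Ideal.span_le]
        rintro _ ⟨a, ha, rfl⟩
        have hne : P j ≠ a := fun h => ha ⟨j, h⟩
        simp only [SetLike.mem_coe, RingHom.mem_ker]
        rw [eval_indPoly q hq, if_neg hne]
      · rw [Ideal.span_le]
        rintro _ ⟨i, -, rfl⟩
        simp only [SetLike.mem_coe, RingHom.mem_ker, map_sub, map_pow, eval_X]
        rw [hq, FiniteField.pow_card, sub_self]
    exact hle hf
  refine ⟨I, Iq, rfl, P, hPinj, ?_, ?_⟩
  · intro p
    constructor
    · intro h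
      by_contra hc
      have hmem : indPoly q p ∈ Iq := by
        apply Ideal.mem_sup_left
        exact Ideal.subset_span ⟨p, fun hr => hc (by obtain ⟨j, hj⟩ := hr; exact ⟨j, hj⟩), rfl⟩
      have h0 := h _ hmem
      rw [eval_indPoly q hq, if_pos rfl] at h0
      exact one_ne_zero h0
    · rintro ⟨j, rfl⟩
      exact hzero j
  · -- evaluation linear map
    set ev : MvPolynomial (Fin N) F →ₗ[F] (Fin N → F) :=
      { toFun := fun f j => MvPolynomial.eval (P j) f
        map_add' := by intro f g; funext j; simp
        map_smul' := by
          intro c f; funext j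
          simp [MvPolynomial.smul_eq_C_mul] } with hev
    have key : ∀ v : Fin N → F,
        (fun k => MvPolynomial.eval (P k) (∑ j : Fin N, MvPolynomial.C (v j) * indPoly q (P j)))
          = v := by
      intro v
      funext k
      rw [map_sum]
      rw [Finset.sum_eq_single k]
      · rw [map_mul, eval_C, eval_indPoly q hq, if_pos rfl, mul_one]
      · intro j _ hjk
        have hne : P k ≠ P j := fun h => hjk (hPinj h).symm
        rw [map_mul, eval_C, eval_indPoly q hq, if_neg hne, mul_zero]
      · simp
    refine ⟨Submodule.map (Ideal.Quotient.mkₐ F Iq).toLinearMap (C.comap ev), ?_⟩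
    ext v
    constructor
    · intro hv
      refine ⟨∑ j : Fin N, MvPolynomial.C (v j) * indPoly q (P j), ⟨_, ?_, rfl⟩, (key v).symm⟩
      have hevf : ev (∑ j : Fin N, MvPolynomial.C (v j) * indPoly q (P j)) = v := key v
      refine Submodule.mem_comap.mpr ?_
      rw [hevf]
      exact hv
    · rintro ⟨f, ⟨g', hg', hgf⟩, rfl⟩
      simp only [AlgHom.toLinearMap_apply, Ideal.Quotient.mkₐ_eq_mk] at hgf
      have hdiff : g' - f ∈ Iq := Ideal.Quotient.eq.mp hgf
      have heval : ∀ j, MvPolynomial.eval (P j) f = MvPolynomial.eval (P j) g' := by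
        intro j
        have h0 := hzero j _ hdiff
        rw [map_sub, sub_eq_zero] at h0
        exact h0.symm
      have hfg : (fun j => MvPolynomial.eval (P j) f) = ev g' := by
        funext j; rw [heval j]; rfl
      rw [hfg]
      exact hg'
end

section
/- Let K be a field, R = K[x_1, …, x_n] graded by positive integer weights w_1, …, w_n (so that the monomial x^α has weight w(α) = α_1 w_1 + ⋯ + α_n w_n), and let I ⊆ R be a W-homogeneous ideal, i.e. an ideal generated by polynomials all of whose monomials have a common weight. For k ≥ 0 let (R/I)_k denote the image in R/I of the K-span of the monomials of weight k. Then each (R/I)_k is a finite-dimensional K-vector space, and there exists a polynomial h(t) ∈ ℤ[t] such that (∑_{k≥0} dim_K (R/I)_k · t^k) · ∏_{i=1}^n (1 − t^{w_i}) = h(t) as formal power series; i.e. the weighted Hilbert–Poincaré series of R/I is the rational function h(t)/∏_{i=1}^n (1 − t^{w_i}). -/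
/-!
Noetherian induction on the homogeneous ideal `I`. If some variable `x_i` is not in `I`,
multiplication by `x_i` gives the exact sequence of graded pieces
`0 → (R/(I : x_i))_{k - w_i} → (R/I)_k → (R/(I + (x_i)))_k → 0`, i.e.
`H_I = H_{I + (x_i)} + t^{w_i} H_{I : x_i}`, and both ideals on the right contain `I`.
If `I : x_i = I` this reads `H_I (1 - t^{w_i}) = H_{I + (x_i)}`, and since `x_i ∈ I + (x_i)`
the induction hypothesis for `I + (x_i)` need not contain the factor `1 - t^{w_i}`. Hence the
induction runs over products indexed by any set of variables containing those outside `I`.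
When all variables lie in `I`, `R/I` is concentrated in degree `0`.
-/

open Module

theorem Submodule.finrank_map_add_finrank_inf_ker {K V W : Type*} [Field K] [AddCommGroup V]
    [Module K V] [AddCommGroup W] [Module K W] (f : V →ₗ[K] W) (U : Submodule K V)
    [FiniteDimensional K U] :
    finrank K (U.map f) + finrank K (U ⊓ LinearMap.ker f : Submodule K V) = finrank K U := by
  have h := LinearMap.finrank_range_add_finrank_ker (f.domRestrict U)
  rwa [LinearMap.range_domRestrict, LinearMap.ker_domRestrict,
    (Submodule.equivSubtypeMap U _).finrank_eq, Submodule.map_comap_subtype] at h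

namespace Ideal

variable {K A : Type*} [Field K] [CommRing A] [Algebra K A] (𝒜 : ℕ → Submodule K A)

def degreePart (I : Ideal A) (k : ℕ) : Submodule K A :=
  𝒜 k ⊓ I.restrictScalars K

noncomputable def hilbertFunction (I : Ideal A) (k : ℕ) : ℕ :=
  finrank K ((𝒜 k).map (Quotient.mkₐ K I).toLinearMap)

noncomputable def hilbertSeries (I : Ideal A) : PowerSeries ℤ :=
  PowerSeries.mk fun k => (I.hilbertFunction 𝒜 k : ℤ)

variable {𝒜} {I J : Ideal A} {f : A} {d k : ℕ}

theorem ker_quotient_mkₐ_toLinearMap (I : Ideal A) :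
    LinearMap.ker (Quotient.mkₐ K I).toLinearMap = I.restrictScalars K := by
  ext
  simp [Quotient.eq_zero_iff_mem]

theorem hilbertFunction_add_finrank_degreePart (I : Ideal A) (k : ℕ)
    [FiniteDimensional K (𝒜 k)] :
    I.hilbertFunction 𝒜 k + finrank K (I.degreePart 𝒜 k) = finrank K (𝒜 k) := by
  rw [hilbertFunction, degreePart, ← ker_quotient_mkₐ_toLinearMap]
  exact Submodule.finrank_map_add_finrank_inf_ker _ _

theorem hilbertFunction_eq_zero_of_le (h : 𝒜 k ≤ I.restrictScalars K) :
    I.hilbertFunction 𝒜 k = 0 := by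
  have h' : 𝒜 k ≤ LinearMap.ker (Quotient.mkₐ K I).toLinearMap :=
    ker_quotient_mkₐ_toLinearMap (K := K) I ▸ h
  rw [hilbertFunction, LinearMap.le_ker_iff_map.mp h', finrank_bot]

variable [GradedAlgebra 𝒜]

theorem IsHomogeneous.colon_span_singleton (hI : I.IsHomogeneous 𝒜) (hf : f ∈ 𝒜 d) :
    (I.colon (span {f})).IsHomogeneous 𝒜 := by
  intro k p hp
  rw [mem_colon_span_singleton, mul_comm] at hp ⊢
  have := hI (k + d) hp
  rwa [DirectSum.coe_decompose_mul_of_left_mem_of_le 𝒜 hf (Nat.le_add_left d k),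
    Nat.add_sub_cancel] at this

theorem isHomogeneous_span_singleton (hf : f ∈ 𝒜 d) : (span {f}).IsHomogeneous 𝒜 :=
  homogeneous_span 𝒜 {f} (by simpa using ⟨d, hf⟩)

theorem degreePart_sup (hI : I.IsHomogeneous 𝒜) (hJ : J.IsHomogeneous 𝒜) :
    (I ⊔ J).degreePart 𝒜 k = I.degreePart 𝒜 k ⊔ J.degreePart 𝒜 k := by
  refine le_antisymm ?_ (sup_le (inf_le_inf_left _ (Submodule.restrictScalars_mono K le_sup_left))
    (inf_le_inf_left _ (Submodule.restrictScalars_mono K le_sup_right)))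
  rintro p ⟨hpk, hp⟩
  obtain ⟨q, hq, r, hr, rfl⟩ := Submodule.mem_sup.mp hp
  rw [← DirectSum.decompose_of_mem_same 𝒜 hpk, DirectSum.decompose_add, DirectSum.add_apply,
    Submodule.coe_add]
  exact Submodule.add_mem_sup ⟨SetLike.coe_mem _, hI k hq⟩ ⟨SetLike.coe_mem _, hJ k hr⟩

theorem degreePart_span_singleton_of_le (hf : f ∈ 𝒜 d) (hdk : d ≤ k) :
    (span {f}).degreePart 𝒜 k = (𝒜 (k - d)).map (LinearMap.mulLeft K f) := by
  apply le_antisymm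
  · rintro p ⟨hpk, hp⟩
    obtain ⟨a, rfl⟩ := mem_span_singleton'.mp hp
    rw [← DirectSum.decompose_of_mem_same 𝒜 hpk, mul_comm,
      DirectSum.coe_decompose_mul_of_left_mem_of_le 𝒜 hf hdk]
    exact ⟨_, SetLike.coe_mem _, rfl⟩
  · rintro _ ⟨g, hg, rfl⟩
    refine ⟨?_, mul_mem_right g _ (mem_span_singleton_self f)⟩
    simpa [Nat.add_sub_cancel' hdk] using SetLike.GradedMul.mul_mem hf hg

theorem degreePart_span_singleton_of_lt (hf : f ∈ 𝒜 d) (hkd : k < d) :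
    (span {f}).degreePart 𝒜 k = ⊥ := by
  refine eq_bot_iff.mpr fun p ⟨hpk, hp⟩ => ?_
  obtain ⟨a, rfl⟩ := mem_span_singleton'.mp hp
  rw [← DirectSum.decompose_of_mem_same 𝒜 hpk, mul_comm,
    DirectSum.coe_decompose_mul_of_left_mem_of_not_le 𝒜 hf hkd.not_ge]
  exact zero_mem _

theorem degreePart_inf_map_mulLeft (hf : f ∈ 𝒜 d) (hdk : d ≤ k) :
    I.degreePart 𝒜 k ⊓ (𝒜 (k - d)).map (LinearMap.mulLeft K f) =
      ((I.colon (span {f})).degreePart 𝒜 (k - d)).map (LinearMap.mulLeft K f) := by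
  apply le_antisymm
  · rintro _ ⟨⟨-, hpI⟩, g, hg, rfl⟩
    refine ⟨g, ⟨hg, ?_⟩, rfl⟩
    simpa [mem_colon_span_singleton, mul_comm] using hpI
  · rintro _ ⟨g, ⟨hg, hgI⟩, rfl⟩
    have hfg : f * g ∈ 𝒜 k := by
      simpa [Nat.add_sub_cancel' hdk] using SetLike.GradedMul.mul_mem hf hg
    refine ⟨⟨hfg, ?_⟩, g, hg, rfl⟩
    simpa [mem_colon_span_singleton, mul_comm] using hgI

variable [∀ k, FiniteDimensional K (𝒜 k)]

-- Grassmann's formula for `I_k + f 𝒜_{k-d}`, whose intersection is `f (I : f)_{k-d}`.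
theorem finrank_degreePart_sup_add_finrank_degreePart_colon (hI : I.IsHomogeneous 𝒜)
    (hf : f ∈ 𝒜 d) (hreg : IsLeftRegular f) (hdk : d ≤ k) :
    finrank K ((I ⊔ span {f}).degreePart 𝒜 k) +
        finrank K ((I.colon (span {f})).degreePart 𝒜 (k - d)) =
      finrank K (I.degreePart 𝒜 k) + finrank K (𝒜 (k - d)) := by
  have : FiniteDimensional K (I.degreePart 𝒜 k) := Submodule.finiteDimensional_of_le inf_le_left
  have hinj : Function.Injective (LinearMap.mulLeft K f) := hreg
  have finrank_map (U : Submodule K A) := (Submodule.equivMapOfInjective _ hinj U).finrank_eq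
  rw [degreePart_sup hI (isHomogeneous_span_singleton hf), degreePart_span_singleton_of_le hf hdk,
    finrank_map ((I.colon (span {f})).degreePart 𝒜 (k - d)),
    ← degreePart_inf_map_mulLeft hf hdk, finrank_map (𝒜 (k - d))]
  exact Submodule.finrank_sup_add_finrank_inf_eq _ _

theorem hilbertFunction_eq_sup_add_colon (hI : I.IsHomogeneous 𝒜) (hf : f ∈ 𝒜 d)
    (hreg : IsLeftRegular f) (hdk : d ≤ k) :
    I.hilbertFunction 𝒜 k = (I ⊔ span {f}).hilbertFunction 𝒜 k +
      (I.colon (span {f})).hilbertFunction 𝒜 (k - d) := by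
  have := finrank_degreePart_sup_add_finrank_degreePart_colon hI hf hreg hdk
  have := hilbertFunction_add_finrank_degreePart (𝒜 := 𝒜) I k
  have := hilbertFunction_add_finrank_degreePart (𝒜 := 𝒜) (I ⊔ span {f}) k
  have := hilbertFunction_add_finrank_degreePart (𝒜 := 𝒜) (I.colon (span {f})) (k - d)
  omega

theorem hilbertFunction_sup_span_singleton_of_lt (hI : I.IsHomogeneous 𝒜) (hf : f ∈ 𝒜 d)
    (hkd : k < d) : (I ⊔ span {f}).hilbertFunction 𝒜 k = I.hilbertFunction 𝒜 k := by
  have h := hilbertFunction_add_finrank_degreePart (𝒜 := 𝒜) I k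
  rw [← hilbertFunction_add_finrank_degreePart (𝒜 := 𝒜) (I ⊔ span {f}) k,
    degreePart_sup hI (isHomogeneous_span_singleton hf), degreePart_span_singleton_of_lt hf hkd,
    sup_bot_eq] at h
  omega

theorem hilbertSeries_eq_sup_add_colon (hI : I.IsHomogeneous 𝒜) (hf : f ∈ 𝒜 d)
    (hreg : IsLeftRegular f) :
    I.hilbertSeries 𝒜 = (I ⊔ span {f}).hilbertSeries 𝒜 +
      PowerSeries.X ^ d * (I.colon (span {f})).hilbertSeries 𝒜 := by
  ext k
  rw [map_add, PowerSeries.coeff_X_pow_mul']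
  simp only [hilbertSeries, PowerSeries.coeff_mk]
  split_ifs with hdk
  · rw [hilbertFunction_eq_sup_add_colon hI hf hreg hdk, Nat.cast_add]
  · rw [hilbertFunction_sup_span_singleton_of_lt hI hf (not_le.mp hdk), add_zero]

end Ideal

attribute [local instance] MvPolynomial.weightedGradedAlgebra

namespace MvPolynomial

variable {σ K : Type*} [Field K] {w : σ → ℕ}

theorem finiteDimensional_weightedHomogeneousSubmodule [Finite σ] (hw : ∀ i, w i ≠ 0)
    (k : ℕ) :
    FiniteDimensional K (weightedHomogeneousSubmodule K w k) :=
  Module.Finite.iff_fg.mpr (weightedHomogeneousSubmodule_fg K w hw k)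

theorem weightedHomogeneousSubmodule_le_of_X_mem {I : Ideal (MvPolynomial σ K)}
    (hX : ∀ i, X i ∈ I) {k : ℕ} (hk : k ≠ 0) :
    weightedHomogeneousSubmodule K w k ≤ I.restrictScalars K := by
  intro p hp
  have hspan : p ∈ Ideal.span (X '' Set.univ) := by
    refine mem_ideal_span_X_image.mpr fun m hm => ?_
    by_contra! h
    have : m = 0 := Finsupp.ext fun i => h i (Set.mem_univ i)
    exact hk (by rw [← hp (mem_support_iff.mp hm), this, map_zero])
  exact Ideal.span_le.mpr (by rintro _ ⟨i, -, rfl⟩; exact hX i) hspan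

theorem hilbertSeries_eq_C_of_X_mem {I : Ideal (MvPolynomial σ K)} (hX : ∀ i, X i ∈ I) :
    I.hilbertSeries (weightedHomogeneousSubmodule K w) =
      PowerSeries.C (I.hilbertFunction (weightedHomogeneousSubmodule K w) 0 : ℤ) := by
  ext k
  rw [PowerSeries.coeff_C, Ideal.hilbertSeries, PowerSeries.coeff_mk]
  split_ifs with hk
  · rw [hk]
  · rw [Ideal.hilbertFunction_eq_zero_of_le (weightedHomogeneousSubmodule_le_of_X_mem hX hk),
      Nat.cast_zero]

theorem exists_hilbertSeries_mul_prod_eq [Finite σ] (hw : ∀ i, w i ≠ 0)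
    (I : Ideal (MvPolynomial σ K)) (hI : I.IsHomogeneous (weightedHomogeneousSubmodule K w))
    (s : Finset σ) (hs : ∀ i ∉ s, X i ∈ I) :
    ∃ h : Polynomial ℤ, I.hilbertSeries (weightedHomogeneousSubmodule K w) *
      ∏ i ∈ s, (1 - PowerSeries.X ^ w i) = h := by
  classical
  have := finiteDimensional_weightedHomogeneousSubmodule (K := K) hw
  induction I using IsNoetherian.induction generalizing s with | _ J IH =>
  by_cases hX : ∀ i, X i ∈ J
  · refine ⟨Polynomial.C (Ideal.hilbertFunction (weightedHomogeneousSubmodule K w) J 0 : ℤ) *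
      ∏ i ∈ s, (1 - Polynomial.X ^ w i), ?_⟩
    rw [hilbertSeries_eq_C_of_X_mem hX, ← Polynomial.coeToPowerSeries.ringHom_apply, map_mul,
      map_prod]
    simp [Polynomial.coeToPowerSeries.ringHom_apply]
  push Not at hX
  obtain ⟨i, hi⟩ := hX
  have his : i ∈ s := by_contra fun h => hi (hs i h)
  have hXi : X i ∈ weightedHomogeneousSubmodule K w (w i) := isWeightedHomogeneous_X K w i
  have hseries :=
    Ideal.hilbertSeries_eq_sup_add_colon hI hXi (IsRegular.of_ne_zero (X_ne_zero i)).left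
  set J' := J ⊔ Ideal.span {(X i : MvPolynomial σ K)}
  set C := J.colon (Ideal.span {(X i : MvPolynomial σ K)})
  have hXiJ' : X i ∈ J' := Ideal.mem_sup_right (Ideal.mem_span_singleton_self _)
  obtain ⟨h₁, eq₁⟩ := IH J' (lt_of_le_of_ne le_sup_left fun h => hi (h ▸ hXiJ'))
    (hI.sup (Ideal.isHomogeneous_span_singleton hXi)) (s.erase i) fun j hj => by
      by_cases hji : j = i
      · exact hji ▸ hXiJ'
      · exact Ideal.mem_sup_left (hs j fun h => hj (Finset.mem_erase.mpr ⟨hji, h⟩))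
  have hJC : J ≤ C := fun p hp => Ideal.mem_colon_span_singleton.mpr (Ideal.mul_mem_right _ J hp)
  rcases hJC.eq_or_lt with hJC | hJC
  · refine ⟨h₁, ?_⟩
    rw [← hJC] at hseries
    rw [← Finset.mul_prod_erase s _ his, ← eq₁]
    linear_combination (∏ j ∈ s.erase i, (1 - PowerSeries.X ^ w j : PowerSeries ℤ)) * hseries
  · obtain ⟨h₂, eq₂⟩ :=
      IH C hJC (hI.colon_span_singleton hXi) s fun j hj => hJC.le (hs j hj)
    refine ⟨h₁ * (1 - Polynomial.X ^ w i) + Polynomial.X ^ w i * h₂, ?_⟩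
    push_cast
    rw [← eq₁, ← eq₂, hseries, ← Finset.mul_prod_erase s _ his]
    ring

end MvPolynomial

theorem stmt_16_general (n : ℕ) (w : Fin n → ℕ) (hw : ∀ i, 0 < w i)
    (K : Type*) [Field K]
    (I : Ideal (MvPolynomial (Fin n) K))
    (hhom : ∃ S : Set (MvPolynomial (Fin n) K),
      (∀ f ∈ S, ∃ m : ℕ, MvPolynomial.IsWeightedHomogeneous w f m) ∧
      I = Ideal.span S)
    (comp : ℕ → Submodule K (MvPolynomial (Fin n) K ⧸ I))
    (hcomp : ∀ k, comp k = Submodule.map (Ideal.Quotient.mkₐ K I).toLinearMap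
      (MvPolynomial.weightedHomogeneousSubmodule K w k)) :
    (∀ k, FiniteDimensional K (comp k)) ∧
    (∃ h : Polynomial ℤ,
      PowerSeries.mk (fun k => (Module.finrank K (comp k) : ℤ)) *
        ((∏ i, (1 - Polynomial.X ^ w i : Polynomial ℤ)) : PowerSeries ℤ) =
        (h : PowerSeries ℤ)) := by
  have hw' : ∀ i, w i ≠ 0 := fun i => (hw i).ne'
  have := MvPolynomial.finiteDimensional_weightedHomogeneousSubmodule (K := K) hw'
  refine ⟨fun k => hcomp k ▸ Module.Finite.map _ _, ?_⟩
  obtain ⟨S, hS, rfl⟩ := hhom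
  have hI : (Ideal.span S).IsHomogeneous (MvPolynomial.weightedHomogeneousSubmodule K w) :=
    Ideal.homogeneous_span _ S fun f hf => let ⟨m, hm⟩ := hS f hf; ⟨m, hm⟩
  obtain rfl := funext hcomp
  push_cast
  exact MvPolynomial.exists_hilbertSeries_mul_prod_eq hw' _ hI Finset.univ (by simp)

/-- **Hilbert–Serre.** Let `R = K[x_1,…,x_n]` be graded by positive integer
weights and `I` a `W`-homogeneous ideal.  Each weighted component `(R/I)_k` (the image in
`R/I` of the span of the monomials of weight `k`) is finite dimensional over `K`, and the
weighted Hilbert–Poincaré series satisfies `(∑ dim_K (R/I)_k t^k)·∏(1 − t^{w_i}) = h(t)`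
for some polynomial `h ∈ ℤ[t]`. -/
theorem stmt_16 (n : ℕ) (hn : 1 ≤ n) (w : Fin n → ℕ) (hw : ∀ i, 0 < w i)
    (K : Type*) [Field K]
    (I : Ideal (MvPolynomial (Fin n) K))
    (hhom : ∃ S : Set (MvPolynomial (Fin n) K),
      (∀ f ∈ S, ∃ m : ℕ, MvPolynomial.IsWeightedHomogeneous w f m) ∧
      I = Ideal.span S)
    (comp : ℕ → Submodule K (MvPolynomial (Fin n) K ⧸ I))
    (hcomp : ∀ k, comp k = Submodule.map (Ideal.Quotient.mkₐ K I).toLinearMap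
      (MvPolynomial.weightedHomogeneousSubmodule K w k)) :
    (∀ k, FiniteDimensional K (comp k)) ∧
    (∃ h : Polynomial ℤ,
      PowerSeries.mk (fun k => (Module.finrank K (comp k) : ℤ)) *
        ((∏ i, (1 - Polynomial.X ^ w i : Polynomial ℤ)) : PowerSeries ℤ) =
        (h : PowerSeries ℤ)) :=
  stmt_16_general n w hw K I hhom comp hcomp
end

section
/- Let K be a field, R = K[x_1, …, x_n] graded by positive integer weights w_1, …, w_n with d = lcm(w_1, …, w_n), and let I ⊆ R be a nonzero W-homogeneous ideal. Let H_{R/I}(k) = dim_K (R/I)_k, where (R/I)_k is the image in R/I of the K-span of the monomials of weight k. Then for any k_0 ∈ ℕ and any polynomials P_0, …, P_{d−1} ∈ ℚ[x] with H_{R/I}(k) = P_{k mod d}(k) for all k ≥ k_0, every P_i has degree at most n − 2 (in particular, strictly less than n − 1, the common degree attained when I = (0)). -/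
/-!
A nonzero homogeneous `f ∈ I` yields `g = f ^ w i₀ ∈ I`, homogeneous of weight `A * w i₀`.
Multiplication by `g` embeds `R_{k - A w i₀}` into the kernel of `R_k → (R/I)_k`, so
`H(k) ≤ #{α : wt α = k} - #{α : wt α = k - A w i₀}`, and removing `A` from the `i₀`-th exponent
bounds this by the number of `α` of weight `k` with `α i₀ < A`. Such an `α` is determined by
`α i₀ < A` and its coordinates `≤ k` away from `i₀` and one further index `j`, giving at most
`A (k + 1) ^ (n - 2)` of them (none if `n = 1`). A polynomial that is `O(k ^ (n - 2))` along the
progression `k ≡ i mod d` has degree at most `n - 2`.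
-/

open MvPolynomial Module Polynomial Filter

theorem Submodule.finrank_map_add_finrank_le {K V W : Type*} [DivisionRing K] [AddCommGroup V]
    [Module K V] [AddCommGroup W] [Module K W] (f : V →ₗ[K] W) {P Q : Submodule K V}
    [FiniteDimensional K P] (hQP : Q ≤ P) (hQf : Q ≤ LinearMap.ker f) :
    finrank K (P.map f) + finrank K Q ≤ finrank K P := by
  have hker : Q.comap P.subtype ≤ LinearMap.ker (f.domRestrict P) := fun x hx => hQf hx
  rw [← LinearMap.range_domRestrict, ← (Submodule.comapSubtypeEquivOfLe hQP).finrank_eq,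
    ← (f.domRestrict P).finrank_range_add_finrank_ker]
  exact Nat.add_le_add_left (Submodule.finrank_mono hker) _

namespace Finsupp

variable {σ : Type*} {w : σ → ℕ}

theorem eq_of_weight_eq_of_forall_ne [Fintype σ] {j : σ} (hj : w j ≠ 0) {d d' : σ →₀ ℕ}
    (h : weight w d = weight w d') (hne : ∀ l ≠ j, d l = d' l) : d = d' := by
  classical
  have hj_eq : d j * w j = d' j * w j := by
    rw [weight_eq_sum, weight_eq_sum, Fintype.sum_eq_add_sum_compl j,
      Fintype.sum_eq_add_sum_compl j,
      Finset.sum_congr rfl fun l hl => by rw [hne l (by simpa using hl)]] at h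
    simpa using h
  ext l
  by_cases hl : l = j
  · subst hl
    exact Nat.eq_of_mul_eq_mul_right (Nat.pos_of_ne_zero hj) hj_eq
  · exact hne l hl

theorem ncard_weight_eq_sdiff_lt_le [Finite σ] (hw : ∀ i, w i ≠ 0) (i : σ) (A k : ℕ) :
    ({d : σ →₀ ℕ | weight w d = k} \ {d | d i < A}).ncard ≤
      {d : σ →₀ ℕ | weight w d = k - A * w i}.ncard := by
  have hle : ∀ d ∈ {d : σ →₀ ℕ | weight w d = k} \ {d | d i < A}, single i A ≤ d :=
    fun d hd => single_le_iff.mpr (not_lt.mp hd.2)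
  refine Set.ncard_le_ncard_of_injOn (· - single i A) (fun d hd => ?_)
    (fun d hd d' hd' h => (tsub_left_inj (hle d hd) (hle d' hd')).mp h)
    (finite_of_nat_weight_eq w hw _)
  have hsum := congrArg (weight w) (tsub_add_cancel_of_le (hle d hd))
  rw [map_add, hd.1, weight_single, smul_eq_mul] at hsum
  simp only [Set.mem_ofPred_eq]
  omega

theorem ncard_weight_eq_inter_lt_le [Fintype σ] [DecidableEq σ] (hw : ∀ i, w i ≠ 0) {i j : σ}
    (hij : i ≠ j) (A k : ℕ) :
    ({d : σ →₀ ℕ | weight w d = k} ∩ {d | d i < A}).ncard ≤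
      A * (k + 1) ^ (Fintype.card σ - 2) := by
  let T := {l // l ≠ i ∧ l ≠ j}
  have hT : Fintype.card T = Fintype.card σ - 2 := by
    rw [Fintype.card_subtype, ← Finset.card_pair hij, ← Finset.card_compl]
    congr 1
    ext
    simp
  let box : Finset (ℕ × (T → ℕ)) :=
    Finset.range A ×ˢ Fintype.piFinset fun _ => Finset.range (k + 1)
  have hbox : box.card = A * (k + 1) ^ (Fintype.card σ - 2) := by
    simp [box, hT]
  rw [← hbox, ← Set.ncard_coe_finset]
  refine Set.ncard_le_ncard_of_injOn (fun d => (d i, fun l : T => d l)) (fun d hd => ?_)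
    (fun d hd d' hd' h => ?_)
  · simp only [Set.mem_inter_iff, Set.mem_ofPred_eq] at hd
    simp only [box, Finset.coe_product, Set.mem_prod, Finset.mem_coe, Finset.mem_range,
      Fintype.mem_piFinset]
    exact ⟨hd.2, fun l => Nat.lt_succ_of_le (hd.1 ▸ le_weight w (hw l) d)⟩
  · simp only [Set.mem_inter_iff, Set.mem_ofPred_eq, Prod.mk.injEq, funext_iff] at hd hd' h
    refine eq_of_weight_eq_of_forall_ne (hw j) (hd.1.trans hd'.1.symm) fun l hlj => ?_
    by_cases hli : l = i
    · exact hli ▸ h.1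
    · exact h.2 ⟨l, hli, hlj⟩

theorem weight_eq_inter_lt_eq_empty [Subsingleton σ] {i : σ} (hw : w i ≠ 0) {A k : ℕ}
    (hk : A * w i ≤ k) : {d : σ →₀ ℕ | weight w d = k} ∩ {d | d i < A} = ∅ := by
  refine Set.eq_empty_of_forall_notMem fun d ⟨hd, hdA⟩ => ?_
  have hd_single : d = single i (d i) := ext fun l => by rw [Subsingleton.elim l i, single_eq_same]
  rw [Set.mem_ofPred_eq, hd_single, weight_single, smul_eq_mul] at hd
  have : d i * w i < A * w i := Nat.mul_lt_mul_of_pos_right hdA (Nat.pos_of_ne_zero hw)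
  omega

end Finsupp

namespace MvPolynomial

variable {σ K : Type*} [Field K] {w : σ → ℕ}

theorem finrank_weightedHomogeneousSubmodule {M : Type*} [AddCommMonoid M] (w : σ → M) (m : M) :
    finrank K (weightedHomogeneousSubmodule K w m) =
      {d : σ →₀ ℕ | Finsupp.weight w d = m}.ncard := by
  rw [weightedHomogeneousSubmodule_eq_finsupp_supported]
  exact finrank_eq_nat_card_basis (basisRestrictSupport K _)

theorem finrank_map_mk_add_finrank_le [Finite σ] (hw : ∀ i, w i ≠ 0)
    {I : Ideal (MvPolynomial σ K)} {g : MvPolynomial σ K} (hgI : g ∈ I) (hg0 : g ≠ 0) {M k : ℕ}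
    (hg : g.IsWeightedHomogeneous w M) (hk : M ≤ k) :
    finrank K ((weightedHomogeneousSubmodule K w k).map (Ideal.Quotient.mkₐ K I).toLinearMap) +
        finrank K (weightedHomogeneousSubmodule K w (k - M)) ≤
      finrank K (weightedHomogeneousSubmodule K w k) := by
  have : FiniteDimensional K (weightedHomogeneousSubmodule K w k) :=
    Module.Finite.iff_fg.mpr (weightedHomogeneousSubmodule_fg K w hw k)
  have hinj : Function.Injective (LinearMap.mulLeft K g) := mul_right_injective₀ hg0
  rw [(Submodule.equivMapOfInjective _ hinj (weightedHomogeneousSubmodule K w (k - M))).finrank_eq]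
  refine Submodule.finrank_map_add_finrank_le _ ?_ ?_
  · rintro _ ⟨p, hp, rfl⟩
    simpa [Nat.add_sub_cancel' hk] using hg.mul hp
  · rintro _ ⟨p, -, rfl⟩
    exact Ideal.Quotient.eq_zero_iff_mem.mpr (I.mul_mem_right p hgI)

theorem finrank_map_mk_le_ncard [Finite σ] (hw : ∀ i, w i ≠ 0)
    {I : Ideal (MvPolynomial σ K)} {g : MvPolynomial σ K} (hgI : g ∈ I) (hg0 : g ≠ 0)
    {i : σ} {A k : ℕ} (hg : g.IsWeightedHomogeneous w (A * w i)) (hk : A * w i ≤ k) :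
    finrank K ((weightedHomogeneousSubmodule K w k).map (Ideal.Quotient.mkₐ K I).toLinearMap) ≤
      ({d : σ →₀ ℕ | Finsupp.weight w d = k} ∩ {d | d i < A}).ncard := by
  have hquot := finrank_map_mk_add_finrank_le hw hgI hg0 hg hk
  have hshift := Finsupp.ncard_weight_eq_sdiff_lt_le hw i A k
  have hsplit := Set.ncard_inter_add_ncard_sdiff_eq_ncard {d : σ →₀ ℕ | Finsupp.weight w d = k}
    {d | d i < A} (Finsupp.finite_of_nat_weight_eq w hw k)
  rw [finrank_weightedHomogeneousSubmodule, finrank_weightedHomogeneousSubmodule] at hquot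
  omega

theorem exists_mem_ne_zero_isWeightedHomogeneous_mul {R : Type*} [CommRing R] [IsDomain R]
    {I : Ideal (MvPolynomial σ R)} (hI : I ≠ ⊥)
    (hhom : ∃ S : Set (MvPolynomial σ R),
      (∀ f ∈ S, ∃ m : ℕ, f.IsWeightedHomogeneous w m) ∧ I = Ideal.span S) {i : σ} (hi : w i ≠ 0) :
    ∃ A, ∃ g ∈ I, g ≠ 0 ∧ g.IsWeightedHomogeneous w (A * w i) := by
  obtain ⟨S, hS, rfl⟩ := hhom
  obtain ⟨f, hfS, hf0⟩ : ∃ f ∈ S, f ≠ 0 := by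
    by_contra! h
    exact hI (Ideal.span_eq_bot.mpr h)
  obtain ⟨m, hf⟩ := hS f hfS
  refine ⟨m, f ^ w i, Ideal.pow_mem_of_mem _ (Ideal.subset_span hfS) _ (Nat.pos_of_ne_zero hi),
    pow_ne_zero _ hf0, ?_⟩
  simpa [mul_comm] using hf.pow (w i)

end MvPolynomial

namespace Polynomial

variable {𝕜 ι : Type*} [NormedField 𝕜] [LinearOrder 𝕜] [IsStrictOrderedRing 𝕜] {p : 𝕜[X]}
  {l : Filter ι} [l.NeBot] {x : ι → 𝕜}

theorem eq_zero_of_eventually_eval_eq_zero (hx : Tendsto x l atTop)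
    (h : ∀ᶠ j in l, p.eval (x j) = 0) : p = 0 := by
  by_contra hp
  obtain ⟨j, hroot, hnot⟩ := (h.and (hx.eventually (eventually_atTop_not_isRoot p hp))).exists
  exact hnot hroot

theorem degree_le_of_abs_eval_le [OrderTopology 𝕜] (hx : Tendsto x l atTop) {C : 𝕜} {e : ℕ}
    (h : ∀ᶠ j in l, |p.eval (x j)| ≤ C * (x j + 1) ^ e) : p.degree ≤ e := by
  by_contra! hlt
  have hQ : ((X + 1) ^ e : 𝕜[X]).degree = e := by
    rw [← C_1, degree_pow, degree_X_add_C, nsmul_one]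
  have hgrow := (abs_div_tendsto_atTop_atTop_of_degree_gt p _ (hQ ▸ hlt)
    (pow_ne_zero _ (X_add_C_ne_zero 1))).comp hx
  obtain ⟨j, hle, hgt, hpos⟩ := (h.and ((hgrow.eventually (eventually_gt_atTop C)).and
    (hx.eventually (eventually_gt_atTop 0)))).exists
  have hxpos : 0 < (x j + 1) ^ e := by positivity
  simp only [Function.comp_apply, eval_pow, eval_add, eval_X, eval_C, abs_div,
    abs_of_pos hxpos, lt_div_iff₀ hxpos] at hgt
  linarith

end Polynomial

/-- Let `R = K[x_1,…,x_n]` be graded by positive integer weights with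
`d = lcm(w_i)` and let `I ≠ 0` be a `W`-homogeneous ideal, with weighted Hilbert function
`H_{R/I}(k) = dim_K (R/I)_k`.  Then any quasi-polynomial `P_0, …, P_{d−1} ∈ ℚ[x]` with
`H_{R/I}(k) = P_{k mod d}(k)` for all `k ≥ k₀` has every `P_i` of degree at most `n − 2`
(strictly less than `n − 1`, the degree attained when `I = (0)`). -/
theorem stmt_17 (n : ℕ) (hn : 1 ≤ n) (w : Fin n → ℕ) (hw : ∀ i, 0 < w i)
    (d : ℕ) (hd : d = Finset.lcm Finset.univ w)
    (K : Type*) [Field K]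
    (I : Ideal (MvPolynomial (Fin n) K)) (hI : I ≠ ⊥)
    (hhom : ∃ S : Set (MvPolynomial (Fin n) K),
      (∀ f ∈ S, ∃ m : ℕ, MvPolynomial.IsWeightedHomogeneous w f m) ∧
      I = Ideal.span S)
    (comp : ℕ → Submodule K (MvPolynomial (Fin n) K ⧸ I))
    (hcomp : ∀ k, comp k = Submodule.map (Ideal.Quotient.mkₐ K I).toLinearMap
      (MvPolynomial.weightedHomogeneousSubmodule K w k))
    (k₀ : ℕ) (P : ℕ → Polynomial ℚ)
    (hP : ∀ k, k₀ ≤ k → (Module.finrank K (comp k) : ℚ) = (P (k % d)).eval (k : ℚ)) :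
    ∀ i, i < d → (P i).degree < ((n - 1 : ℕ) : WithBot ℕ) := by
  intro i hi
  have hw' : ∀ j, w j ≠ 0 := fun j => (hw j).ne'
  have hd0 : 0 < d := hd ▸ Nat.pos_of_ne_zero (by simp [Finset.lcm_eq_zero_iff, hw'])
  let i₀ : Fin n := ⟨0, hn⟩
  obtain ⟨A, g, hgI, hg0, hg⟩ := exists_mem_ne_zero_isWeightedHomogeneous_mul hI hhom (hw' i₀)
  let x : ℕ → ℕ := fun j => i + d * j
  have hjx : ∀ j, j ≤ x j := fun j => le_add_left (Nat.le_mul_of_pos_left j hd0)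
  have hx : Tendsto (fun j => (x j : ℚ)) atTop atTop :=
    tendsto_natCast_atTop_atTop.comp (tendsto_atTop_mono hjx tendsto_id)
  have hH : ∀ᶠ j in atTop, A * w i₀ ≤ x j ∧ (P i).eval (x j : ℚ) = finrank K (comp (x j)) ∧
      finrank K (comp (x j)) ≤
        ({α : Fin n →₀ ℕ | Finsupp.weight w α = x j} ∩ {α | α i₀ < A}).ncard := by
    filter_upwards [eventually_ge_atTop (k₀ + A * w i₀)] with j hj
    have hj_le := hjx j
    refine ⟨by omega, ?_, hcomp _ ▸ finrank_map_mk_le_ncard hw' hgI hg0 hg (by omega)⟩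
    rw [hP _ (by omega), Nat.add_mul_mod_self_left, Nat.mod_eq_of_lt hi]
  rcases (show n = 1 ∨ 2 ≤ n by omega) with rfl | hn2
  · suffices P i = 0 by simp [this]
    refine eq_zero_of_eventually_eval_eq_zero hx (hH.mono fun j ⟨hk, heval, hbound⟩ => ?_)
    rw [Finsupp.weight_eq_inter_lt_eq_empty (hw' i₀) hk, Set.ncard_empty] at hbound
    simp [heval, Nat.le_zero.mp hbound]
  · have hlt : (n - 2 : ℕ) < (n - 1 : ℕ) := by omega
    refine (degree_le_of_abs_eval_le hx (C := A) (e := n - 2)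
      (hH.mono fun j ⟨_, heval, hbound⟩ => ?_)).trans_lt (by exact_mod_cast hlt)
    have hcount := hbound.trans (Finsupp.ncard_weight_eq_inter_lt_le hw' (i := i₀)
      (j := ⟨n - 1, by omega⟩) (by simp [i₀, Fin.ext_iff]; omega) A (x j))
    rw [Fintype.card_fin] at hcount
    rw [heval, abs_of_nonneg (by positivity)]
    exact_mod_cast hcount
end
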